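/- arXiv:2203.05302 — 5 statements merged into one kernel-verified Lean document; each statement's English description precedes it below -/
import Mathlib

section
/- Let u : ℝ × ℝ → ℝ be three times continuously differentiable in x and once in t, with m := u − u_{xx} such that m, m_x, m_t are continuous, and fix λ ∈ ℂ with λ ≠ 0. Define the 2×2 complex matrices U(x,t) := (1/2)·[[−1, λ·m],[−λ·m, 1]] and V(x,t) := [[λ^{−2} + (u² − u_x²)/2, −λ^{−1}(u − u_x) − λ(u² − u_x²)m/2],[λ^{−1}(u + u_x) + λ(u² − u_x²)m/2, −λ^{−2} − (u² − u_x²)/2]]. Then at every point (x,t), the zero-curvature equation ∂_t U − ∂_x V + U·V − V·U = 0 holds if and only if m_t(x,t) + ((u² − u_x²)·m)_x(x,t) = 0, i.e. if and only if the mCH equation holds at (x,t). -/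
/-!
Write `U` and `V` in the basis `σ₃ = diag(1, -1)`, `J = [[0, 1], [-1, 0]]`, `σ₁ = [[0, 1], [1, 0]]`,
whose commutators are `[σ₃, J] = 2σ₁`, `[σ₃, σ₁] = 2J`, `[J, σ₁] = 2σ₃`. In `U_t - V_x + [U, V]`
the `σ₃`-component cancels because `(u² - u_x²)_x = 2 u_x m`, the `σ₁`-component cancels because
`u - m = u_xx`, and what is left is `λ/2 · (m_t + ((u² - u_x²) m)_x) · J`.
-/

open Matrix

def pauliZ : Matrix (Fin 2) (Fin 2) ℂ := !![1, 0; 0, -1]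
def pauliX : Matrix (Fin 2) (Fin 2) ℂ := !![0, 1; 1, 0]
def rotJ : Matrix (Fin 2) (Fin 2) ℂ := !![0, 1; -1, 0]

theorem commutator_sl2_basis (a b p q r : ℂ) :
    (a • pauliZ + b • rotJ) * (p • pauliZ + q • rotJ + r • pauliX)
      - (p • pauliZ + q • rotJ + r • pauliX) * (a • pauliZ + b • rotJ)
      = (2 * b * r) • pauliZ + (2 * a * r) • rotJ + (2 * (a * q - b * p)) • pauliX := by
  ext i j
  fin_cases i <;> fin_cases j <;> simp [pauliZ, pauliX, rotJ] <;> ring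

theorem smul_rotJ_eq_zero_iff {c : ℂ} : c • rotJ = 0 ↔ c = 0 := by
  refine smul_eq_zero.trans (or_iff_left fun h => ?_)
  simpa [rotJ] using congrFun (congrFun h 0) 1

noncomputable def laxU (lam m : ℂ) : Matrix (Fin 2) (Fin 2) ℂ :=
  (-1 / 2 : ℂ) • pauliZ + (lam * m / 2) • rotJ

noncomputable def laxV (lam u ux m : ℂ) : Matrix (Fin 2) (Fin 2) ℂ :=
  (1 / lam ^ 2 + (u ^ 2 - ux ^ 2) / 2) • pauliZ
    + (-(u / lam) - lam * (u ^ 2 - ux ^ 2) * m / 2) • rotJ + (ux / lam) • pauliX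

theorem laxU_eq_matrix (lam m : ℂ) :
    laxU lam m = (1 / 2 : ℂ) • !![-1, lam * m; -(lam * m), 1] := by
  ext i j
  fin_cases i <;> fin_cases j <;> simp [laxU, pauliZ, rotJ] <;> ring

theorem laxV_eq_matrix (lam u ux m : ℂ) :
    laxV lam u ux m =
      !![1 / lam ^ 2 + (u ^ 2 - ux ^ 2) / 2,
         -(1 / lam) * (u - ux) - lam * (u ^ 2 - ux ^ 2) * m / 2;
         (1 / lam) * (u + ux) + lam * (u ^ 2 - ux ^ 2) * m / 2,
         -(1 / lam ^ 2) - (u ^ 2 - ux ^ 2) / 2] := by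
  ext i j
  fin_cases i <;> fin_cases j <;> simp [laxV, pauliZ, pauliX, rotJ] <;> ring

theorem laxU_mul_laxV_sub {lam : ℂ} (hlam : lam ≠ 0) (u ux m : ℂ) :
    laxU lam m * laxV lam u ux m - laxV lam u ux m * laxU lam m
      = (m * ux) • pauliZ + (-(ux / lam)) • rotJ + ((u - m) / lam) • pauliX := by
  have hZ : 2 * (lam * m / 2) * (ux / lam) = m * ux := by field_simp
  have hJ : 2 * (-1 / 2) * (ux / lam) = -(ux / lam) := by ring
  have hX : 2 * (-1 / 2 * (-(u / lam) - lam * (u ^ 2 - ux ^ 2) * m / 2)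
      - lam * m / 2 * (1 / lam ^ 2 + (u ^ 2 - ux ^ 2) / 2)) = (u - m) / lam := by
    field_simp; ring
  rw [laxU, laxV, commutator_sl2_basis, hZ, hJ, hX]

section Derivatives

attribute [local instance] Matrix.normedAddCommGroup Matrix.normedSpace

theorem HasDerivAt.matrix_of_deriv_eq {𝕜 E ι κ : Type*} [NontriviallyNormedField 𝕜]
    [NormedAddCommGroup E] [NormedSpace 𝕜 E] [Fintype ι] [Fintype κ]
    {F : 𝕜 → Matrix ι κ E} {F' : Matrix ι κ E} {x : 𝕜} (h : HasDerivAt F F' x) :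
    (Matrix.of fun i j => _root_.deriv (fun ξ => F ξ i j) x) = F' := by
  ext i j
  exact (hasDerivAt_pi.1 (hasDerivAt_pi.1 h i) j).deriv

theorem matrix_of_deriv_laxU (lam : ℂ) {m : ℝ → ℝ} {dm t : ℝ} (hm : HasDerivAt m dm t) :
    (Matrix.of fun i j => deriv (fun τ => laxU lam (m τ) i j) t) = (lam * dm / 2) • rotJ :=
  (((hm.ofReal_comp.const_mul lam).div_const 2).smul_const rotJ
    |>.const_add ((-1 / 2 : ℂ) • pauliZ)).matrix_of_deriv_eq

theorem matrix_of_deriv_laxV (lam : ℂ) {u ux m : ℝ → ℝ} {du dux dEm x : ℝ}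
    (hu : HasDerivAt u du x) (hux : HasDerivAt ux dux x)
    (hEm : HasDerivAt (fun ξ => (u ξ ^ 2 - ux ξ ^ 2) * m ξ) dEm x) :
    (Matrix.of fun i j => deriv (fun ξ => laxV lam (u ξ) (ux ξ) (m ξ) i j) x)
      = ((u x : ℂ) * du - ux x * dux) • pauliZ + (-(du / lam) - lam * dEm / 2) • rotJ
        + (dux / lam) • pauliX := by
  have hE := (((hu.fun_pow 2).fun_sub (hux.fun_pow 2)).ofReal_comp.div_const 2).const_add
    (1 / lam ^ 2)
  have hq := (hu.ofReal_comp.div_const lam).fun_neg.fun_sub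
    ((hEm.ofReal_comp.const_mul lam).div_const 2)
  have hr := hux.ofReal_comp.div_const lam
  have hV : (fun ξ => laxV lam (u ξ) (ux ξ) (m ξ)) = fun ξ =>
      (1 / lam ^ 2 + ((u ξ ^ 2 - ux ξ ^ 2 : ℝ) : ℂ) / 2) • pauliZ
        + (-((u ξ : ℂ) / lam) - lam * (((u ξ ^ 2 - ux ξ ^ 2) * m ξ : ℝ) : ℂ) / 2) • rotJ
        + ((ux ξ : ℂ) / lam) • pauliX := by
    funext ξ
    push_cast
    rw [laxV, mul_assoc lam]
  refine HasDerivAt.matrix_of_deriv_eq ?_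
  rw [hV]
  refine (((hE.smul_const pauliZ).add (hq.smul_const rotJ)).add
    (hr.smul_const pauliX)).congr_deriv ?_
  push_cast
  ring_nf

end Derivatives

theorem zeroCurvature_laxPair {lam : ℂ} (hlam : lam ≠ 0) {u ux uxx m : ℂ} (hm : m = u - uxx)
    (mt dEm : ℂ) :
    (lam * mt / 2) • rotJ
      - ((u * ux - ux * uxx) • pauliZ + (-(ux / lam) - lam * dEm / 2) • rotJ
        + (uxx / lam) • pauliX)
      + laxU lam m * laxV lam u ux m - laxV lam u ux m * laxU lam m
      = (lam * (mt + dEm) / 2) • rotJ := by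
  rw [add_sub_assoc, laxU_mul_laxV_sub hlam, hm]
  module

theorem stmt_0_general
    (u ux uxx m mx mt : ℝ → ℝ → ℝ)
    (hux : ∀ x t, HasDerivAt (fun ξ => u ξ t) (ux x t) x)
    (huxx : ∀ x t, HasDerivAt (fun ξ => ux ξ t) (uxx x t) x)
    (hm : ∀ x t, m x t = u x t - uxx x t)
    (hmx : ∀ x t, HasDerivAt (fun ξ => m ξ t) (mx x t) x)
    (hmt : ∀ x t, HasDerivAt (fun τ => m x τ) (mt x t) t)
    (lam : ℂ) (hlam : lam ≠ 0)
    (U V : ℝ → ℝ → Matrix (Fin 2) (Fin 2) ℂ)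
    (hU : ∀ x t, U x t = (1/2 : ℂ) •
      !![(-1 : ℂ), lam * (m x t : ℂ); -(lam * (m x t : ℂ)), 1])
    (hV : ∀ x t, V x t =
      !![1/lam^2 + ((u x t : ℂ)^2 - (ux x t : ℂ)^2)/2,
         -(1/lam) * ((u x t : ℂ) - (ux x t : ℂ))
           - lam * ((u x t : ℂ)^2 - (ux x t : ℂ)^2) * (m x t : ℂ)/2;
         (1/lam) * ((u x t : ℂ) + (ux x t : ℂ))
           + lam * ((u x t : ℂ)^2 - (ux x t : ℂ)^2) * (m x t : ℂ)/2,
         -(1/lam^2) - ((u x t : ℂ)^2 - (ux x t : ℂ)^2)/2]) :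
    ∀ x t,
      ((Matrix.of fun i j => deriv (fun τ => U x τ i j) t)
        - (Matrix.of fun i j => deriv (fun ξ => V ξ t i j) x)
        + U x t * V x t - V x t * U x t = 0)
      ↔ mt x t + deriv (fun ξ => ((u ξ t)^2 - (ux ξ t)^2) * m ξ t) x = 0 := by
  intro x t
  have hUeq : U = fun y s => laxU lam (m y s) := by
    ext y s : 2; rw [hU, laxU_eq_matrix]
  have hVeq : V = fun y s => laxV lam (u y s) (ux y s) (m y s) := by
    ext y s : 2; rw [hV, laxV_eq_matrix]
  have hEm : HasDerivAt (fun ξ => (u ξ t ^ 2 - ux ξ t ^ 2) * m ξ t)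
      (deriv (fun ξ => (u ξ t ^ 2 - ux ξ t ^ 2) * m ξ t) x) x :=
    ((((hux x t).fun_pow 2).fun_sub ((huxx x t).fun_pow 2)).fun_mul (hmx x t)).differentiableAt
      |>.hasDerivAt
  have hmC : (m x t : ℂ) = u x t - uxx x t := mod_cast hm x t
  rw [hUeq, hVeq]
  dsimp only
  rw [matrix_of_deriv_laxU lam (hmt x t), matrix_of_deriv_laxV lam (hux x t) (huxx x t) hEm,
    zeroCurvature_laxPair hlam hmC, smul_rotJ_eq_zero_iff]
  simp [hlam]
  norm_cast

/-- for the mCH Lax-pair matrices U, V, the zero-curvature equation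
∂_t U − ∂_x V + U·V − V·U = 0 holds at (x,t) iff the mCH equation
m_t + ((u² − u_x²)·m)_x = 0 holds at (x,t). -/
theorem stmt_0
    (u ux uxx m mx mt : ℝ → ℝ → ℝ)
    (hu3 : ∀ t, ContDiff ℝ 3 (fun x => u x t))
    (hut : ∀ x, ContDiff ℝ 1 (fun t => u x t))
    (hux : ∀ x t, HasDerivAt (fun ξ => u ξ t) (ux x t) x)
    (huxx : ∀ x t, HasDerivAt (fun ξ => ux ξ t) (uxx x t) x)
    (hm : ∀ x t, m x t = u x t - uxx x t)
    (hmx : ∀ x t, HasDerivAt (fun ξ => m ξ t) (mx x t) x)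
    (hmt : ∀ x t, HasDerivAt (fun τ => m x τ) (mt x t) t)
    (hmc : Continuous fun p : ℝ × ℝ => m p.1 p.2)
    (hmxc : Continuous fun p : ℝ × ℝ => mx p.1 p.2)
    (hmtc : Continuous fun p : ℝ × ℝ => mt p.1 p.2)
    (lam : ℂ) (hlam : lam ≠ 0)
    (U V : ℝ → ℝ → Matrix (Fin 2) (Fin 2) ℂ)
    (hU : ∀ x t, U x t = (1/2 : ℂ) •
      !![(-1 : ℂ), lam * (m x t : ℂ); -(lam * (m x t : ℂ)), 1])
    (hV : ∀ x t, V x t =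
      !![1/lam^2 + ((u x t : ℂ)^2 - (ux x t : ℂ)^2)/2,
         -(1/lam) * ((u x t : ℂ) - (ux x t : ℂ))
           - lam * ((u x t : ℂ)^2 - (ux x t : ℂ)^2) * (m x t : ℂ)/2;
         (1/lam) * ((u x t : ℂ) + (ux x t : ℂ))
           + lam * ((u x t : ℂ)^2 - (ux x t : ℂ)^2) * (m x t : ℂ)/2,
         -(1/lam^2) - ((u x t : ℂ)^2 - (ux x t : ℂ)^2)/2]) :
    ∀ x t,
      ((Matrix.of fun i j => deriv (fun τ => U x τ i j) t)
        - (Matrix.of fun i j => deriv (fun ξ => V ξ t i j) x)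
        + U x t * V x t - V x t * U x t = 0)
      ↔ mt x t + deriv (fun ξ => ((u ξ t)^2 - (ux ξ t)^2) * m ξ t) x = 0 :=
  stmt_0_general u ux uxx m mx mt hux huxx hm hmx hmt lam hlam U V hU hV
end

section
/- Let A₁, A₂ ∈ ℝ and let m : ℝ → ℝ be continuous and bounded with m(x) → A₁ as x → −∞, m(x) → A₂ as x → +∞, m − A₁ integrable on (−∞, 0], and m − A₂ integrable on [0, ∞). Define v(x) := (A₁ + A₂)/2 + ∫_{−∞}^x e^{−(x−ξ)}·(m(ξ) − A₁)/2 dξ + ∫_x^∞ e^{x−ξ}·(m(ξ) − A₂)/2 dξ. Then v is twice continuously differentiable, v(x) − v''(x) = m(x) for all x ∈ ℝ, v(x) → A₁ as x → −∞, v(x) → A₂ as x → +∞, and v'(x) → 0 as x → ±∞; moreover v'(x) = (A₂ − A₁)/2 − ∫_{−∞}^x e^{−(x−ξ)}·(m(ξ) − A₁)/2 dξ + ∫_x^∞ e^{x−ξ}·(m(ξ) − A₂)/2 dξ. -/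
/-!
With `L h x = ∫_{ξ<x} e^{-(x-ξ)} h ξ` and `R h x = ∫_{ξ>x} e^{x-ξ} h ξ` (`leftExpConv`,
`rightExpConv`), `v = (A₁+A₂)/2 + L h₁ + R h₂` where `hᵢ = (m - Aᵢ)/2`. Since
`L h x = e^{-x} ∫_{ξ<x} e^ξ h ξ`, the fundamental theorem of calculus gives `(L h)' = h - L h`, and
as `R` is `L` conjugated by the reflection `x ↦ -x`, also `(R h)' = R h - h`. Hence
`v' = (A₂-A₁)/2 - L h₁ + R h₂` and `v'' = v - m`. Writing `L h x = ∫_0^∞ e^{-u} h (x-u) du`,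
dominated convergence shows that `L h` and `R h` have the same limits at `±∞` as a bounded `h`,
which yields the boundary behaviour of `v` and `v'`.
-/

open MeasureTheory Filter Set Real Topology

lemma integrableOn_Iic_of_continuous {g : ℝ → ℝ} (hc : Continuous g) (hi : IntegrableOn g (Iic 0))
    (b : ℝ) : IntegrableOn g (Iic b) :=
  (hi.union (hc.integrableOn_Icc (a := 0) (b := b))).mono_set fun ξ hξ =>
    (le_total ξ 0).imp id fun h0 => ⟨h0, hξ⟩

lemma hasDerivAt_integral_Iio {g : ℝ → ℝ} (hc : Continuous g) (hi : IntegrableOn g (Iic 0))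
    (x : ℝ) : HasDerivAt (fun y => ∫ ξ in Iio y, g ξ) (g x) x := by
  have hsplit :
      (fun y => ∫ ξ in Iio y, g ξ) = fun y => (∫ ξ in Iic 0, g ξ) + ∫ ξ in 0..y, g ξ := by
    ext y
    rw [← integral_Iic_eq_integral_Iio,
      ← intervalIntegral.integral_Iic_sub_Iic hi (integrableOn_Iic_of_continuous hc hi y)]
    ring
  rw [hsplit]
  exact (hc.integral_hasStrictDerivAt 0 x).hasDerivAt.const_add _

lemma integrableOn_Iic_comp_neg {g : ℝ → ℝ} (hi : IntegrableOn g (Ici 0)) :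
    IntegrableOn (fun ξ => g (-ξ)) (Iic 0) := by
  rw [← Measure.map_neg_eq_self (volume : Measure ℝ)] at hi
  have := (integrableOn_map_equiv (MeasurableEquiv.neg ℝ)).1 hi
  change IntegrableOn (g ∘ Neg.neg) (Neg.neg ⁻¹' Ici 0) volume at this
  rwa [Set.neg_preimage, Set.neg_Ici, neg_zero] at this

lemma contDiff_two_of_hasDerivAt {f f' f'' : ℝ → ℝ} (hf : ∀ x, HasDerivAt f (f' x) x)
    (hf' : ∀ x, HasDerivAt f' (f'' x) x) (hf'' : Continuous f'') : ContDiff ℝ 2 f := by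
  have hd : deriv f = f' := funext fun x => (hf x).deriv
  have hdd : deriv f' = f'' := funext fun x => (hf' x).deriv
  rw [show (2 : WithTop ℕ∞) = 1 + 1 from rfl, contDiff_succ_iff_deriv, hd, contDiff_one_iff_deriv,
    hdd]
  exact ⟨fun x => (hf x).differentiableAt, by simp, fun x => (hf' x).differentiableAt, hf''⟩

noncomputable def leftExpConv (h : ℝ → ℝ) (x : ℝ) : ℝ := ∫ ξ in Iio x, exp (-(x - ξ)) * h ξ

noncomputable def rightExpConv (h : ℝ → ℝ) (x : ℝ) : ℝ := ∫ ξ in Ioi x, exp (x - ξ) * h ξ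

lemma rightExpConv_eq_leftExpConv_comp_neg (h : ℝ → ℝ) (x : ℝ) :
    rightExpConv h x = leftExpConv (fun ξ => h (-ξ)) (-x) := by
  rw [leftExpConv, ← integral_Iic_eq_integral_Iio, ← neg_neg x, ← integral_comp_neg_Ioi, neg_neg,
    rightExpConv]
  simp_rw [neg_neg, sub_neg_eq_add, neg_add, neg_neg, ← sub_eq_add_neg]

lemma leftExpConv_eq_exp_neg_mul (h : ℝ → ℝ) (x : ℝ) :
    leftExpConv h x = exp (-x) * ∫ ξ in Iio x, exp ξ * h ξ := by
  rw [leftExpConv, ← integral_const_mul]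
  congr 1 with ξ
  rw [neg_sub, sub_eq_neg_add, exp_add]
  ring

lemma integral_Iio_eq_integral_Ioi_zero_comp_sub (F : ℝ → ℝ) (x : ℝ) :
    ∫ ξ in Iio x, F ξ = ∫ u in Ioi 0, F (x - u) := by
  rw [← integral_indicator measurableSet_Iio, ← integral_indicator measurableSet_Ioi,
    ← integral_sub_left_eq_self _ volume x]
  congr 1 with u
  by_cases hu : 0 < u <;> simp [hu]

lemma leftExpConv_eq_integral_Ioi_zero (h : ℝ → ℝ) (x : ℝ) :
    leftExpConv h x = ∫ u in Ioi 0, exp (-u) * h (x - u) := by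
  rw [leftExpConv, integral_Iio_eq_integral_Ioi_zero_comp_sub]
  simp_rw [sub_sub_cancel]

section
variable {h : ℝ → ℝ}

lemma hasDerivAt_leftExpConv (hc : Continuous h) (hi : IntegrableOn h (Iic 0)) (x : ℝ) :
    HasDerivAt (leftExpConv h) (h x - leftExpConv h x) x := by
  have hexp_h : IntegrableOn (fun ξ => exp ξ * h ξ) (Iic 0) := by
    refine hi.bdd_mul (c := 1) (continuous_exp.aestronglyMeasurable) ?_
    filter_upwards [ae_restrict_mem measurableSet_Iic] with ξ hξ
    simpa [abs_of_pos (exp_pos ξ)] using exp_le_one_iff.2 hξ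
  have hF :=
    hasDerivAt_integral_Iio (g := fun ξ => exp ξ * h ξ) (continuous_exp.mul hc) hexp_h x
  have hprod := ((hasDerivAt_neg x).exp).mul hF
  rw [funext (leftExpConv_eq_exp_neg_mul h)]
  refine hprod.congr_deriv ?_
  rw [← mul_assoc, ← exp_add, neg_add_cancel, exp_zero]
  ring

lemma hasDerivAt_rightExpConv (hc : Continuous h) (hi : IntegrableOn h (Ici 0)) (x : ℝ) :
    HasDerivAt (rightExpConv h) (rightExpConv h x - h x) x := by
  have hL := hasDerivAt_leftExpConv (h := fun ξ => h (-ξ)) (hc.comp continuous_neg)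
    (integrableOn_Iic_comp_neg hi) (-x)
  rw [funext (rightExpConv_eq_leftExpConv_comp_neg h)]
  refine (hL.scomp x (hasDerivAt_neg x)).congr_deriv ?_
  rw [neg_neg]
  ring

lemma tendsto_leftExpConv {l : Filter ℝ} [l.IsCountablyGenerated] {a C : ℝ}
    (hl : ∀ c, Tendsto (· + c) l l) (hc : Continuous h) (hb : ∀ x, |h x| ≤ C)
    (hlim : Tendsto h l (𝓝 a)) : Tendsto (leftExpConv h) l (𝓝 a) := by
  have ha : a = ∫ u in Ioi 0, exp (-u) * a := by
    rw [integral_mul_const, integral_exp_neg_Ioi_zero, one_mul]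
  rw [funext (leftExpConv_eq_integral_Ioi_zero h), ha]
  refine tendsto_integral_filter_of_dominated_convergence (fun u => exp (-u) * C) ?_ ?_
    ((integrableOn_exp_neg_Ioi 0).mul_const C) ?_
  · exact .of_forall fun x => (continuous_exp.comp continuous_neg).mul
      (hc.comp (continuous_sub_left x)) |>.aestronglyMeasurable
  · refine .of_forall fun x => .of_forall fun u => ?_
    rw [norm_mul, norm_of_nonneg (exp_pos _).le, norm_eq_abs]
    exact mul_le_mul_of_nonneg_left (hb _) (exp_pos _).le
  · refine .of_forall fun u => (hlim.comp ?_).const_mul _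
    simpa [sub_eq_add_neg] using hl (-u)

lemma tendsto_leftExpConv_atTop {a C : ℝ} (hc : Continuous h) (hb : ∀ x, |h x| ≤ C)
    (hlim : Tendsto h atTop (𝓝 a)) : Tendsto (leftExpConv h) atTop (𝓝 a) :=
  tendsto_leftExpConv (fun c => tendsto_atTop_add_const_right _ c tendsto_id) hc hb hlim

lemma tendsto_leftExpConv_atBot {a C : ℝ} (hc : Continuous h) (hb : ∀ x, |h x| ≤ C)
    (hlim : Tendsto h atBot (𝓝 a)) : Tendsto (leftExpConv h) atBot (𝓝 a) :=
  tendsto_leftExpConv (fun c => tendsto_atBot_add_const_right _ c tendsto_id) hc hb hlim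

lemma tendsto_rightExpConv_atTop {a C : ℝ} (hc : Continuous h) (hb : ∀ x, |h x| ≤ C)
    (hlim : Tendsto h atTop (𝓝 a)) : Tendsto (rightExpConv h) atTop (𝓝 a) := by
  rw [funext (rightExpConv_eq_leftExpConv_comp_neg h)]
  exact (tendsto_leftExpConv_atBot (hc.comp continuous_neg) (fun x => hb (-x))
    (hlim.comp tendsto_neg_atBot_atTop)).comp tendsto_neg_atTop_atBot

lemma tendsto_rightExpConv_atBot {a C : ℝ} (hc : Continuous h) (hb : ∀ x, |h x| ≤ C)
    (hlim : Tendsto h atBot (𝓝 a)) : Tendsto (rightExpConv h) atBot (𝓝 a) := by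
  rw [funext (rightExpConv_eq_leftExpConv_comp_neg h)]
  exact (tendsto_leftExpConv_atTop (hc.comp continuous_neg) (fun x => hb (-x))
    (hlim.comp tendsto_neg_atTop_atBot)).comp tendsto_neg_atBot_atTop

end

/-- Green's function inversion of 1 − d²/dx² on functions
approaching A₁ at −∞ and A₂ at +∞. -/
theorem stmt_13 (A1 A2 : ℝ) (m : ℝ → ℝ)
    (hmc : Continuous m) (hmb : ∃ C, ∀ x, |m x| ≤ C)
    (hm1 : Tendsto m atBot (nhds A1))
    (hm2 : Tendsto m atTop (nhds A2))
    (hi1 : IntegrableOn (fun x => m x - A1) (Set.Iic 0))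
    (hi2 : IntegrableOn (fun x => m x - A2) (Set.Ici 0))
    (v : ℝ → ℝ)
    (hv : ∀ x, v x = (A1 + A2)/2
        + (∫ ξ in Set.Iio x, Real.exp (-(x - ξ)) * (m ξ - A1)/2)
        + (∫ ξ in Set.Ioi x, Real.exp (x - ξ) * (m ξ - A2)/2)) :
    ContDiff ℝ 2 v ∧
    (∀ x, v x - deriv (deriv v) x = m x) ∧
    Tendsto v atBot (nhds A1) ∧
    Tendsto v atTop (nhds A2) ∧
    Tendsto (deriv v) atBot (nhds 0) ∧
    Tendsto (deriv v) atTop (nhds 0) ∧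
    (∀ x, deriv v x = (A2 - A1)/2
        - (∫ ξ in Set.Iio x, Real.exp (-(x - ξ)) * (m ξ - A1)/2)
        + (∫ ξ in Set.Ioi x, Real.exp (x - ξ) * (m ξ - A2)/2)) := by
  obtain ⟨C, hC⟩ := hmb
  set h₁ : ℝ → ℝ := fun ξ => (m ξ - A1) / 2
  set h₂ : ℝ → ℝ := fun ξ => (m ξ - A2) / 2
  have hc₁ : Continuous h₁ := (hmc.sub continuous_const).div_const 2
  have hc₂ : Continuous h₂ := (hmc.sub continuous_const).div_const 2
  have hb : ∀ A x, |(m x - A) / 2| ≤ (C + |A|) / 2 := fun A x => by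
    rw [abs_div, abs_two]
    gcongr
    linarith [abs_sub (m x) A, hC x]
  have hv' : v = fun x => (A1 + A2) / 2 + leftExpConv h₁ x + rightExpConv h₂ x := by
    funext x; simp only [hv, leftExpConv, rightExpConv, h₁, h₂, mul_div_assoc]
  set w : ℝ → ℝ := fun x => (A2 - A1) / 2 - leftExpConv h₁ x + rightExpConv h₂ x
  have hvw : ∀ x, HasDerivAt v (w x) x := fun x => by
    rw [hv']
    refine (((hasDerivAt_const x _).add (hasDerivAt_leftExpConv hc₁ (hi1.div_const 2) x)).add
      (hasDerivAt_rightExpConv hc₂ (hi2.div_const 2) x)).congr_deriv ?_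
    simp only [w, h₁, h₂]; ring
  have hw : ∀ x, HasDerivAt w (v x - m x) x := fun x => by
    refine (((hasDerivAt_const x _).sub (hasDerivAt_leftExpConv hc₁ (hi1.div_const 2) x)).add
      (hasDerivAt_rightExpConv hc₂ (hi2.div_const 2) x)).congr_deriv ?_
    rw [hv']; simp only [h₁, h₂]; ring
  have hdv : deriv v = w := funext fun x => (hvw x).deriv
  have hlim : ∀ {l : Filter ℝ} {a : ℝ} (A : ℝ), Tendsto m l (𝓝 a) →
      Tendsto (fun ξ => (m ξ - A) / 2) l (𝓝 ((a - A) / 2)) :=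
    fun _ hm => (hm.sub_const _).div_const 2
  have hL₁bot := tendsto_leftExpConv_atBot hc₁ (hb A1) (hlim A1 hm1)
  have hL₁top := tendsto_leftExpConv_atTop hc₁ (hb A1) (hlim A1 hm2)
  have hR₂bot := tendsto_rightExpConv_atBot hc₂ (hb A2) (hlim A2 hm1)
  have hR₂top := tendsto_rightExpConv_atTop hc₂ (hb A2) (hlim A2 hm2)
  refine ⟨contDiff_two_of_hasDerivAt hvw hw ?_, fun x => ?_, ?_, ?_, ?_, ?_, fun x => ?_⟩
  · exact (continuous_iff_continuousAt.2 fun x => (hvw x).continuousAt).sub hmc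
  · rw [hdv, (hw x).deriv]; ring
  · rw [hv']
    convert (tendsto_const_nhds.add hL₁bot).add hR₂bot using 2
    ring
  · rw [hv']
    convert (tendsto_const_nhds.add hL₁top).add hR₂top using 2
    ring
  · rw [hdv]
    convert (tendsto_const_nhds.sub hL₁bot).add hR₂bot using 2
    ring
  · rw [hdv]
    convert (tendsto_const_nhds.sub hL₁top).add hR₂top using 2
    ring
  · simp only [hdv, w, leftExpConv, rightExpConv, h₁, h₂, mul_div_assoc]
end

section
/- Let 0 < A₁ and 0 < A₂, and let u : ℝ → ℝ be twice continuously differentiable and bounded with u(x) → A₁ as x → −∞, u(x) → A₂ as x → +∞, and u'(x) → 0 as x → ±∞. Suppose m := u − u'' is continuous and bounded with m − A₁ integrable on (−∞, 0] and m − A₂ integrable on [0, ∞). Define a₁(x) := exp(−(1/(2A₂))·∫_x^∞ (m(ξ) − A₂) dξ), a₂(x) := (A₁/2 + ∫_{−∞}^x e^{−(x−ξ)}·(m(ξ) − A₁)/2 dξ)·a₁(x)^{−1}, and a₃(x) := (A₂/2 + ∫_x^∞ e^{x−ξ}·(m(ξ) − A₂)/2 dξ)·a₁(x). Then for every x ∈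 ℝ: u(x) = a₁(x)·a₂(x) + a₁(x)^{−1}·a₃(x) and u'(x) = −a₁(x)·a₂(x) + a₁(x)^{−1}·a₃(x). -/
/-!
Both `a₁ a₂` and `a₁⁻¹ a₃` are free of `a₁`, and they are the variation-of-constants
solutions of the factorised equation `(1 + ∂)(1 - ∂) u = (1 - ∂)(1 + ∂) u = m`:
`a₁ a₂ = (u - u')/2` and `a₁⁻¹ a₃ = (u + u')/2`, because `v = u ∓ u'` solves
`v' = ±(m - v)` with limit `A₁` at `-∞`, resp. `A₂` at `+∞`. Adding and subtracting
gives `u` and `u'`.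
-/

open MeasureTheory Filter Set Real Topology

lemma integrableOn_Iic_of_continuous_s14 {f : ℝ → ℝ} (hf : Continuous f) {a : ℝ}
    (h : IntegrableOn f (Iic a)) (b : ℝ) : IntegrableOn f (Iic b) :=
  (h.union (hf.integrableOn_Icc (a := a) (b := b))).mono_set fun ξ hξ =>
    (le_or_gt ξ a).imp id fun h => ⟨h.le, hξ⟩

lemma integrableOn_Ioi_of_continuous {f : ℝ → ℝ} (hf : Continuous f) {a : ℝ}
    (h : IntegrableOn f (Ici a)) (b : ℝ) : IntegrableOn f (Ioi b) :=
  (h.union (hf.integrableOn_Icc (a := b) (b := a))).mono_set fun ξ hξ =>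
    (le_or_gt a ξ).imp id fun h => ⟨le_of_lt hξ, h.le⟩

lemma integral_Iic_exp_mul_eq_of_hasDerivAt {v g : ℝ → ℝ} {L x : ℝ}
    (hv : ∀ ξ ≤ x, HasDerivAt v (g ξ - v ξ) ξ) (hlim : Tendsto v atBot (𝓝 L))
    (hg : IntegrableOn (fun ξ => g ξ - L) (Iic x)) :
    ∫ ξ in Iic x, exp (ξ - x) * (g ξ - L) = v x - L := by
  have hF : ∀ ξ ∈ Iic x, HasDerivAt (fun ξ => exp (ξ - x) * (v ξ - L))
      (exp (ξ - x) * (g ξ - L)) ξ := fun ξ hξ =>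
    (((hasDerivAt_id ξ).sub_const x).exp.mul ((hv ξ hξ).sub_const L)).congr_deriv
      (by simp only [id]; ring)
  have hint : IntegrableOn (fun ξ => exp (ξ - x) * (g ξ - L)) (Iic x) :=
    hg.bdd_mul (c := 1) (by fun_prop) <| (ae_restrict_iff' measurableSet_Iic).2 <|
      Eventually.of_forall fun ξ (hξ : ξ ≤ x) => by
        rw [norm_of_nonneg (exp_pos _).le, exp_le_one_iff]; linarith
  have htend : Tendsto (fun ξ => exp (ξ - x) * (v ξ - L)) atBot (𝓝 0) := by
    have hexp : Tendsto (fun ξ => exp (ξ - x)) atBot (𝓝 0) :=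
      tendsto_exp_atBot.comp (tendsto_atBot_add_const_right atBot (-x) tendsto_id)
    simpa using hexp.mul (hlim.sub_const L)
  simpa using integral_Iic_of_hasDerivAt_of_tendsto' hF hint htend

lemma integral_Ioi_exp_mul_eq_of_hasDerivAt {v g : ℝ → ℝ} {L x : ℝ}
    (hv : ∀ ξ ≥ x, HasDerivAt v (v ξ - g ξ) ξ) (hlim : Tendsto v atTop (𝓝 L))
    (hg : IntegrableOn (fun ξ => g ξ - L) (Ioi x)) :
    ∫ ξ in Ioi x, exp (x - ξ) * (g ξ - L) = v x - L := by
  have hF : ∀ ξ ∈ Ici x, HasDerivAt (fun ξ => -(exp (x - ξ) * (v ξ - L)))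
      (exp (x - ξ) * (g ξ - L)) ξ := fun ξ hξ =>
    (((hasDerivAt_id ξ).const_sub x).exp.mul ((hv ξ hξ).sub_const L)).neg.congr_deriv
      (by simp only [id]; ring)
  have hint : IntegrableOn (fun ξ => exp (x - ξ) * (g ξ - L)) (Ioi x) :=
    hg.bdd_mul (c := 1) (by fun_prop) <| (ae_restrict_iff' measurableSet_Ioi).2 <|
      Eventually.of_forall fun ξ (hξ : x < ξ) => by
        rw [norm_of_nonneg (exp_pos _).le, exp_le_one_iff]; linarith
  have htend : Tendsto (fun ξ => -(exp (x - ξ) * (v ξ - L))) atTop (𝓝 0) := by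
    have hexp : Tendsto (fun ξ => exp (x - ξ)) atTop (𝓝 0) :=
      tendsto_exp_atBot.comp (tendsto_atBot_add_const_left atTop x tendsto_neg_atTop_atBot)
    simpa using (hexp.mul (hlim.sub_const L)).neg
  simpa using integral_Ioi_of_hasDerivAt_of_tendsto' hF hint htend

theorem stmt_14_general (A1 A2 : ℝ)
    (u : ℝ → ℝ) (hu : ContDiff ℝ 2 u)
    (hu1 : Tendsto u atBot (nhds A1))
    (hu2 : Tendsto u atTop (nhds A2))
    (hu'1 : Tendsto (deriv u) atBot (nhds 0))
    (hu'2 : Tendsto (deriv u) atTop (nhds 0))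
    (m : ℝ → ℝ) (hm : ∀ x, m x = u x - deriv (deriv u) x)
    (hmc : Continuous m)
    (hi1 : IntegrableOn (fun x => m x - A1) (Set.Iic 0))
    (hi2 : IntegrableOn (fun x => m x - A2) (Set.Ici 0))
    (a1 a2 a3 : ℝ → ℝ)
    (ha1 : ∀ x, a1 x = Real.exp (-(1/(2*A2)) * ∫ ξ in Set.Ioi x, (m ξ - A2)))
    (ha2 : ∀ x, a2 x =
      (A1/2 + ∫ ξ in Set.Iio x, Real.exp (-(x - ξ)) * (m ξ - A1)/2) * (a1 x)⁻¹)
    (ha3 : ∀ x, a3 x =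
      (A2/2 + ∫ ξ in Set.Ioi x, Real.exp (x - ξ) * (m ξ - A2)/2) * a1 x) :
    ∀ x, u x = a1 x * a2 x + (a1 x)⁻¹ * a3 x ∧
      deriv u x = -(a1 x * a2 x) + (a1 x)⁻¹ * a3 x := by
  intro x
  have hu' ξ : HasDerivAt u (deriv u ξ) ξ := (hu.differentiable two_ne_zero ξ).hasDerivAt
  have hu'' ξ : HasDerivAt (deriv u) (deriv (deriv u) ξ) ξ :=
    (hu.differentiable_deriv_two ξ).hasDerivAt
  have hleft : ∫ ξ in Iic x, exp (ξ - x) * (m ξ - A1) = u x - deriv u x - A1 :=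
    integral_Iic_exp_mul_eq_of_hasDerivAt (v := fun ξ => u ξ - deriv u ξ)
      (fun ξ _ => ((hu' ξ).sub (hu'' ξ)).congr_deriv (by rw [hm]; ring))
      (by simpa using hu1.sub hu'1)
      (integrableOn_Iic_of_continuous_s14 (by fun_prop) hi1 x)
  have hright : ∫ ξ in Ioi x, exp (x - ξ) * (m ξ - A2) = u x + deriv u x - A2 :=
    integral_Ioi_exp_mul_eq_of_hasDerivAt (v := fun ξ => u ξ + deriv u ξ)
      (fun ξ _ => ((hu' ξ).add (hu'' ξ)).congr_deriv (by rw [hm]; ring))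
      (by simpa using hu2.add hu'2)
      (integrableOn_Ioi_of_continuous (by fun_prop) hi2 x)
  have ha1x : a1 x ≠ 0 := by rw [ha1]; exact (exp_pos _).ne'
  rw [ha2, ha3, ← integral_Iic_eq_integral_Iio, integral_div, integral_div]
  simp only [neg_sub]
  rw [hleft, hright]
  constructor <;> field_simp <;> ring

/-- recovery formulas for u and u' in terms of the coefficients
a₁, a₂, a₃ of the expansion at λ = 0 of the Riemann–Hilbert solution. -/
theorem stmt_14 (A1 A2 : ℝ) (hA1 : 0 < A1) (hA2 : 0 < A2)
    (u : ℝ → ℝ) (hu : ContDiff ℝ 2 u) (hub : ∃ C, ∀ x, |u x| ≤ C)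
    (hu1 : Tendsto u atBot (nhds A1))
    (hu2 : Tendsto u atTop (nhds A2))
    (hu'1 : Tendsto (deriv u) atBot (nhds 0))
    (hu'2 : Tendsto (deriv u) atTop (nhds 0))
    (m : ℝ → ℝ) (hm : ∀ x, m x = u x - deriv (deriv u) x)
    (hmc : Continuous m) (hmb : ∃ C, ∀ x, |m x| ≤ C)
    (hi1 : IntegrableOn (fun x => m x - A1) (Set.Iic 0))
    (hi2 : IntegrableOn (fun x => m x - A2) (Set.Ici 0))
    (a1 a2 a3 : ℝ → ℝ)
    (ha1 : ∀ x, a1 x = Real.exp (-(1/(2*A2)) * ∫ ξ in Set.Ioi x, (m ξ - A2)))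
    (ha2 : ∀ x, a2 x =
      (A1/2 + ∫ ξ in Set.Iio x, Real.exp (-(x - ξ)) * (m ξ - A1)/2) * (a1 x)⁻¹)
    (ha3 : ∀ x, a3 x =
      (A2/2 + ∫ ξ in Set.Ioi x, Real.exp (x - ξ) * (m ξ - A2)/2) * a1 x) :
    ∀ x, u x = a1 x * a2 x + (a1 x)⁻¹ * a3 x ∧
      deriv u x = -(a1 x * a2 x) + (a1 x)⁻¹ * a3 x :=
  stmt_14_general A1 A2 u hu hu1 hu2 hu'1 hu'2 m hm hmc hi1 hi2 a1 a2 a3 ha1 ha2 ha3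
end

section
/- Let A₂ > 0, T > 0, and let u : ℝ × (0,T) → ℝ be three times continuously differentiable in x and once in t, with m := u − u_{xx} > 0 everywhere and satisfying the mCH equation m_t + ((u² − u_x²)·m)_x = 0. Assume for every t ∈ (0,T): m(·,t) − A₂ is integrable on (x, ∞) for every x, ∂_t ∫_x^∞ (m(ξ,t) − A₂) dξ = ∫_x^∞ m_t(ξ,t) dξ, and ((u² − u_x²)·m)(ξ,t) → A₂³ as ξ → +∞. Define y(x,t) := x − (1/A₂)·∫_x^∞ (m(ξ,t) − A₂) dξ − A₂²·t, and suppose X : ℝ × (0,T) → ℝ is continuously differentiable, with continuous mixed second partial ∂_t∂_y X, and satisfies y(X(y,t), t) = y for all (y,t). Then: (i) ∂_y X(y,t) = A₂ / m(X(y,t), t); (ii) ∂_t X(y,t) = (u² − u_x²)(X(y,t), t); (iii) ∂_t ∂_y X(y,t) = 2A₂·u_x(X(y,t), t); and (iv) setting â₁(y,t) := exp(−(1/(2A₂))·∫_{X(y,t)}^∞ (m(ξ,t) − A₂) dξ), one has X(y,t) = y − 2·ln â₁(y,t) + A₂²·t and u_x(X(y,t), t) = −(1/A₂)·∂_t∂_y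 ln â₁(y,t). -/
/-!
Differentiating `y (X v t) t = v` in `v` gives (i). Differentiating `X (y x t) t = x` in `t`
(a chain rule that only needs the partials of `X` to be continuous) gives
`m · X_t (y x t) t = ∫_x^∞ m_t + A₂³`, and by the mCH equation `m_t = -((u² - u_x²) m)_x`,
so whenever `m_t (·, t)` is integrable the right-hand side is `(u² - u_x²) m`, which is (ii).

Since a Bochner integral of a non-integrable function is `0`, integrability of `m_t` must be
proved. The times at which it holds are dense: on an interval of bad times `∂_t ∫ (m - A₂)`
would vanish, freezing `m` and forcing `m_t = 0`. The left-hand side above is continuous in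
`t`, and so is `(u² - u_x²) m`, because the maximum principle for `1 - ∂ₓ²` bounds `u_x` by
`u` and `m = u - u_xx`. Hence at a bad time the flux would be the constant `A₂³`, whose
derivative `-m_t = 0` is integrable after all.

(iii) is (ii) differentiated in `y`, after exchanging the mixed partials of `X`, and (iv) is a
rewriting of (i) and (iii) through `log â₁ = -(X - y - A₂² t) / 2`.
-/

open MeasureTheory Filter Set Topology

theorem ContDiff.contDiff_of_hasDerivAt {f f' : ℝ → ℝ} {n : ℕ} (hf : ContDiff ℝ (n + 1) f)
    (hf' : ∀ x, HasDerivAt f (f' x) x) : ContDiff ℝ n f' := by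
  rw [show f' = deriv f from funext fun x => (hf' x).deriv.symm]
  exact (contDiff_succ_iff_deriv.1 hf).2.2

section SecondOrder

variable {w w' e : ℝ → ℝ} {a b E : ℝ}

theorem le_on_Icc_of_hasDerivAt_eq_self_sub (hw : ∀ ξ, HasDerivAt w (w' ξ) ξ)
    (hw' : ∀ ξ, HasDerivAt w' (w ξ - e ξ) ξ) (he : ∀ ξ ∈ Icc a b, e ξ ≤ E)
    (ha : w a ≤ E) (hb : w b ≤ E) : ∀ ξ ∈ Icc a b, w ξ ≤ E := by
  rcases (Icc a b).eq_empty_or_nonempty with hempty | hne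
  · simp [hempty]
  have hwc : Continuous w := continuous_iff_continuousAt.2 fun ξ => (hw ξ).continuousAt
  obtain ⟨c, hc, hmax⟩ := isCompact_Icc.exists_isMaxOn hne hwc.continuousOn
  suffices w c ≤ E from fun ξ hξ => (hmax hξ).trans this
  by_contra! hcE
  have hc' : c ∈ Ioo a b :=
    ⟨hc.1.lt_of_ne (by rintro rfl; linarith), hc.2.lt_of_ne (by rintro rfl; linarith)⟩
  have hlocmax : IsLocalMax w c := hmax.isLocalMax (Icc_mem_nhds hc'.1 hc'.2)
  have hpos : 0 < w c - e c := by linarith [he c hc]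
  have hderiv : deriv w = w' := funext fun ξ => (hw ξ).deriv
  -- `w'' > 0` at the maximum makes `c` also a local minimum, so `w` is locally constant there
  have hlocmin : IsLocalMin w c := isLocalMin_of_deriv_deriv_pos
    (by rwa [hderiv, (hw' c).deriv]) (by rw [hderiv]; exact hlocmax.hasDerivAt_eq_zero (hw c))
    hwc.continuousAt
  have hconst : w =ᶠ[𝓝 c] fun _ => w c :=
    (hlocmin.and hlocmax).mono fun ξ h => le_antisymm h.2 h.1
  have hw'_zero : w' =ᶠ[𝓝 c] fun _ => 0 := hconst.eventuallyEq_nhds.mono fun ξ h =>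
    (hw ξ).unique ((hasDerivAt_const ξ (w c)).congr_of_eventuallyEq h)
  exact hpos.ne' ((hw' c).unique ((hasDerivAt_const c (0 : ℝ)).congr_of_eventuallyEq hw'_zero))

theorem abs_le_on_Icc_of_hasDerivAt_eq_self_sub (hw : ∀ ξ, HasDerivAt w (w' ξ) ξ)
    (hw' : ∀ ξ, HasDerivAt w' (w ξ - e ξ) ξ) (he : ∀ ξ ∈ Icc a b, |e ξ| ≤ E)
    (ha : |w a| ≤ E) (hb : |w b| ≤ E) : ∀ ξ ∈ Icc a b, |w ξ| ≤ E := by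
  have hle := le_on_Icc_of_hasDerivAt_eq_self_sub hw hw' (fun ξ hξ => (abs_le.1 (he ξ hξ)).2)
    (abs_le.1 ha).2 (abs_le.1 hb).2
  have hge := le_on_Icc_of_hasDerivAt_eq_self_sub (w := fun ξ => -w ξ) (w' := fun ξ => -w' ξ)
    (e := fun ξ => -e ξ) (fun ξ => (hw ξ).neg) (fun ξ => (hw' ξ).neg.congr_deriv (by ring))
    (fun ξ hξ => neg_le.1 (abs_le.1 (he ξ hξ)).1) (neg_le.1 (abs_le.1 ha).1)
    (neg_le.1 (abs_le.1 hb).1)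
  exact fun ξ hξ => abs_le.2 ⟨neg_le.1 (hge ξ hξ), hle ξ hξ⟩

theorem abs_deriv_le_of_abs_le_on_Icc {w'' : ℝ → ℝ} {M₀ M₂ : ℝ}
    (hw : ∀ ξ, HasDerivAt w (w' ξ) ξ) (hw' : ∀ ξ, HasDerivAt w' (w'' ξ) ξ)
    (h₀ : ∀ ξ ∈ Icc a (a + 1), |w ξ| ≤ M₀) (h₂ : ∀ ξ ∈ Icc a (a + 1), |w'' ξ| ≤ M₂) :
    |w' a| ≤ 2 * M₀ + M₂ := by
  have hwc : Continuous w := continuous_iff_continuousAt.2 fun ξ => (hw ξ).continuousAt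
  obtain ⟨c, hc, hslope⟩ := exists_hasDerivAt_eq_slope w w' (lt_add_one a) hwc.continuousOn
    fun ξ _ => hw ξ
  have hw'c : |w' c| ≤ 2 * M₀ := by
    rw [hslope, add_sub_cancel_left, div_one]
    linarith [abs_sub (w (a + 1)) (w a), h₀ (a + 1) (right_mem_Icc.2 (by linarith)),
      h₀ a (left_mem_Icc.2 (by linarith))]
  have hc' : c ∈ Icc a (a + 1) := Ioo_subset_Icc_self hc
  have hdiff := norm_image_sub_le_of_norm_deriv_le_segment'
    (fun ξ _ => (hw' ξ).hasDerivWithinAt) (fun ξ hξ => h₂ ξ (Ico_subset_Icc_self hξ)) c hc'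
  have hM₂ : 0 ≤ M₂ := (abs_nonneg _).trans (h₂ a (left_mem_Icc.2 (by linarith)))
  have : M₂ * (c - a) ≤ M₂ := by nlinarith [hc.1, hc.2]
  rw [Real.norm_eq_abs] at hdiff
  linarith [abs_sub_abs_le_abs_sub (w' a) (w' c), abs_sub_comm (w' c) (w' a)]

end SecondOrder

theorem continuousAt_partialDeriv_of_helmholtz {u ux m : ℝ → ℝ → ℝ} {S : Set ℝ} {t₀ : ℝ}
    (hS : S ∈ 𝓝 t₀) (hux : ∀ ξ, ∀ t ∈ S, HasDerivAt (u · t) (ux ξ t) ξ)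
    (huxx : ∀ ξ, ∀ t ∈ S, HasDerivAt (ux · t) (u ξ t - m ξ t) ξ)
    (hu : ∀ ξ, ContinuousAt (u ξ) t₀) (hm : ∀ ξ, ContinuousAt ↿m (ξ, t₀)) (x : ℝ) :
    ContinuousAt (ux x) t₀ := by
  rw [Metric.continuousAt_iff']
  intro η hη
  have hε : 0 < η / 5 := by positivity
  have hm_unif : ∀ᶠ t in 𝓝 t₀, ∀ ξ ∈ Icc x (x + 1), |m ξ t - m ξ t₀| < η / 5 := by
    refine isCompact_Icc.eventually_forall_of_forall_eventually fun ξ _ => ?_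
    have hc : ContinuousAt (fun z : ℝ × ℝ => |m z.2 z.1 - m z.2 t₀|) (t₀, ξ) :=
      (((hm ξ).comp_of_eq continuous_swap.continuousAt rfl).sub
        ((hm ξ).comp_of_eq (continuous_snd.prodMk continuous_const).continuousAt rfl)).abs
    exact hc.eventually_lt continuousAt_const (by simpa using hε)
  have hu_near : ∀ ξ, ∀ᶠ t in 𝓝 t₀, |u ξ t - u ξ t₀| < η / 5 := fun ξ => by
    simpa [Real.dist_eq] using Metric.continuousAt_iff'.1 (hu ξ) _ hε
  filter_upwards [hS, hm_unif, hu_near x, hu_near (x + 1)] with t ht hm_t hu₀ hu₁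
  have ht₀ : t₀ ∈ S := mem_of_mem_nhds hS
  -- maximum principle for `w = u(·,t) - u(·,t₀)` on `[x, x + 1]`, then interpolation for `w' x`
  have hw : ∀ ξ, HasDerivAt (fun ζ => u ζ t - u ζ t₀) (ux ξ t - ux ξ t₀) ξ := fun ξ =>
    (hux ξ t ht).sub (hux ξ t₀ ht₀)
  have hw' : ∀ ξ, HasDerivAt (fun ζ => ux ζ t - ux ζ t₀)
      ((u ξ t - u ξ t₀) - (m ξ t - m ξ t₀)) ξ := fun ξ =>
    ((huxx ξ t ht).sub (huxx ξ t₀ ht₀)).congr_deriv (by ring)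
  have hw_le := abs_le_on_Icc_of_hasDerivAt_eq_self_sub hw hw' (fun ξ hξ => (hm_t ξ hξ).le)
    hu₀.le hu₁.le
  have hw'_le := abs_deriv_le_of_abs_le_on_Icc (M₂ := 2 * (η / 5)) hw hw' hw_le fun ξ hξ => by
    linarith [abs_sub (u ξ t - u ξ t₀) (m ξ t - m ξ t₀), hw_le ξ hξ, hm_t ξ hξ]
  rw [Real.dist_eq]
  linarith

section Partials

variable {F F₁ F₂ F₁₂ : ℝ → ℝ → ℝ} {S : Set ℝ} {t₀ : ℝ}

theorem ContinuousOn.continuous_slice {G : ℝ → ℝ → ℝ} (hG : ContinuousOn ↿G (univ ×ˢ S))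
    {t : ℝ} (ht : t ∈ S) : Continuous (G · t) :=
  hG.comp_continuous (continuous_id.prodMk continuous_const) fun _ => ⟨trivial, ht⟩

theorem hasDerivAt_comp_of_continuousOn_partials (hS : IsOpen S)
    (hF₁ : ∀ v, ∀ t ∈ S, HasDerivAt (F · t) (F₁ v t) v)
    (hF₂ : ∀ v, ∀ t ∈ S, HasDerivAt (F v ·) (F₂ v t) t)
    (hc₁ : ContinuousOn ↿F₁ (univ ×ˢ S)) (hc₂ : ContinuousOn ↿F₂ (univ ×ˢ S))
    {Ψ : ℝ → ℝ} {Ψ' : ℝ} (ht₀ : t₀ ∈ S) (hΨ : HasDerivAt Ψ Ψ' t₀) :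
    HasDerivAt (fun t => F (Ψ t) t) (F₁ (Ψ t₀) t₀ * Ψ' + F₂ (Ψ t₀) t₀) t₀ := by
  set L : ℝ → ℝ →L[ℝ] ℝ := ContinuousLinearMap.toSpanSingleton ℝ
  have hL : Continuous L := (ContinuousLinearMap.toSpanSingletonLIE ℝ ℝ).continuous
  have hU : univ ×ˢ S ∈ 𝓝 (Ψ t₀, t₀) := (isOpen_univ.prod hS).mem_nhds ⟨trivial, ht₀⟩
  have hS' : ∀ᶠ p : ℝ × ℝ in 𝓝 (Ψ t₀, t₀), p.2 ∈ S := mem_of_superset hU fun p hp => hp.2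
  have hF : HasFDerivAt ↿F ((L (F₁ (Ψ t₀) t₀)).coprod (L (F₂ (Ψ t₀) t₀))) (Ψ t₀, t₀) :=
    (hasStrictFDerivAt_uncurry_coprod (f₁ := fun v t => L (F₁ v t))
      (f₂ := fun v t => L (F₂ v t))
      (hS'.mono fun p hp => (hF₁ p.1 p.2 hp).hasFDerivAt)
      (hS'.mono fun p hp => (hF₂ p.1 p.2 hp).hasFDerivAt)
      (hL.continuousAt.comp (hc₁.continuousAt hU))
      (hL.continuousAt.comp (hc₂.continuousAt hU))).hasFDerivAt
  exact (hF.comp_hasDerivAt (f := fun t => (Ψ t, t)) t₀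
    (hΨ.prodMk (hasDerivAt_id' t₀))).congr_deriv (by simp [L, mul_comm])

theorem hasDerivAt_intervalIntegral_of_continuousOn {G G' : ℝ → ℝ → ℝ} (hS : IsOpen S)
    (hG : ∀ v, ∀ t ∈ S, HasDerivAt (G v ·) (G' v t) t)
    (hGc : ContinuousOn ↿G (univ ×ˢ S)) (hG'c : ContinuousOn ↿G' (univ ×ˢ S))
    (ht₀ : t₀ ∈ S) (a b : ℝ) :
    HasDerivAt (fun t => ∫ v in a..b, G v t) (∫ v in a..b, G' v t₀) t₀ := by
  obtain ⟨ε, hε, hball⟩ := Metric.isOpen_iff.1 hS t₀ ht₀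
  have hK : uIcc a b ×ˢ Metric.closedBall t₀ (ε / 2) ⊆ univ ×ˢ S := fun p hp =>
    ⟨trivial, hball (Metric.closedBall_subset_ball (half_lt_self hε) hp.2)⟩
  obtain ⟨C, hC⟩ := (isCompact_uIcc.prod
    (isCompact_closedBall t₀ (ε / 2))).exists_bound_of_continuousOn (hG'c.mono hK)
  have hsub : Metric.ball t₀ (ε / 2) ⊆ S :=
    (Metric.ball_subset_ball (half_le_self hε.le)).trans hball
  refine (intervalIntegral.hasDerivAt_integral_of_dominated_loc_of_deriv_le
    (F := fun t v => G v t) (F' := fun t v => G' v t) (bound := fun _ => C)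
    (Metric.ball_mem_nhds t₀ (half_pos hε))
    ((hS.eventually_mem ht₀).mono fun t ht => (hGc.continuous_slice ht).aestronglyMeasurable)
    ((hGc.continuous_slice ht₀).intervalIntegrable _ _)
    (hG'c.continuous_slice ht₀).aestronglyMeasurable ?_ intervalIntegrable_const ?_).2
  · refine Eventually.of_forall fun v hv t ht => hC (v, t) ⟨uIoc_subset_uIcc hv, ?_⟩
    exact Metric.ball_subset_closedBall ht
  · exact Eventually.of_forall fun v _ t ht => hG v t (hsub ht)

theorem hasDerivAt_partial_of_hasDerivAt_mixed (hS : IsOpen S)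
    (hF₁ : ∀ v, ∀ t ∈ S, HasDerivAt (F · t) (F₁ v t) v)
    (hF₂ : ∀ v, ∀ t ∈ S, HasDerivAt (F v ·) (F₂ v t) t)
    (hF₁₂ : ∀ v, ∀ t ∈ S, HasDerivAt (F₁ v ·) (F₁₂ v t) t)
    (hc₁ : ContinuousOn ↿F₁ (univ ×ˢ S)) (hc₁₂ : ContinuousOn ↿F₁₂ (univ ×ˢ S))
    (ht₀ : t₀ ∈ S) (v₀ : ℝ) : HasDerivAt (F₂ · t₀) (F₁₂ v₀ t₀) v₀ := by
  -- `F₂ z t₀ - F₂ v₀ t₀ = ∂ₜ ∫_{v₀}^z F₁ = ∫_{v₀}^z F₁₂`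
  have hint : ∀ z, F₂ z t₀ = F₂ v₀ t₀ + ∫ v in v₀..z, F₁₂ v t₀ := by
    intro z
    have hFTC : (fun t => ∫ v in v₀..z, F₁ v t) =ᶠ[𝓝 t₀] fun t => F z t - F v₀ t :=
      (hS.eventually_mem ht₀).mono fun t ht => intervalIntegral.integral_eq_sub_of_hasDerivAt
        (fun v _ => hF₁ v t ht) ((hc₁.continuous_slice ht).intervalIntegrable _ _)
    have := ((hasDerivAt_intervalIntegral_of_continuousOn hS hF₁₂ hc₁ hc₁₂ ht₀ v₀
      z).congr_of_eventuallyEq hFTC.symm).unique ((hF₂ z t₀ ht₀).sub (hF₂ v₀ t₀ ht₀))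
    linarith
  rw [funext hint]
  have hc : Continuous (F₁₂ · t₀) := hc₁₂.continuous_slice ht₀
  exact (intervalIntegral.integral_hasDerivAt_right (hc.intervalIntegrable _ _)
    (hc.stronglyMeasurableAtFilter _ _) hc.continuousAt).const_add _

end Partials

theorem continuousAt_uncurry_of_strictMono_of_rightInverse {f g : ℝ → ℝ → ℝ} {x₀ t₀ : ℝ}
    (hf : ∀ᶠ t in 𝓝 t₀, StrictMono (f · t)) (hfg : ∀ᶠ t in 𝓝 t₀, ∀ v, f (g v t) t = v)
    (hg : ∀ v, ContinuousAt (g v) t₀) : ContinuousAt ↿f (x₀, t₀) := by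
  have hf' : ∀ᶠ p : ℝ × ℝ in 𝓝 (x₀, t₀), StrictMono (f · p.2) := by
    rw [nhds_prod_eq]; exact hf.prod_inr _
  have hfg' : ∀ᶠ p : ℝ × ℝ in 𝓝 (x₀, t₀), ∀ v, f (g v p.2) p.2 = v := by
    rw [nhds_prod_eq]; exact hfg.prod_inr _
  have hgt : ∀ v, ContinuousAt (fun p : ℝ × ℝ => g v p.2) (x₀, t₀) := fun v =>
    (hg v).comp continuousAt_snd
  refine tendsto_order.2 ⟨fun a ha => ?_, fun b hb => ?_⟩
  · have hlt : g a t₀ < x₀ := hf.self_of_nhds.lt_iff_lt.1 (by rwa [hfg.self_of_nhds a])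
    filter_upwards [(hgt a).eventually_lt continuousAt_fst hlt, hf', hfg'] with p hp hmono hinv
    have h : f (g a p.2) p.2 < f p.1 p.2 := hmono hp
    rwa [hinv a] at h
  · have hlt : x₀ < g b t₀ := hf.self_of_nhds.lt_iff_lt.1 (by rwa [hfg.self_of_nhds b])
    filter_upwards [continuousAt_fst.eventually_lt (hgt b) hlt, hf', hfg'] with p hp hmono hinv
    have h : f p.1 p.2 < f (g b p.2) p.2 := hmono hp
    rwa [hinv b] at h

theorem Continuous.integrableOn_Ioi_iff {E : Type*} [NormedAddCommGroup E] {f : ℝ → E}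
    (hf : Continuous f) (a b : ℝ) : IntegrableOn f (Ioi a) ↔ IntegrableOn f (Ioi b) := by
  suffices ∀ a b, IntegrableOn f (Ioi a) → IntegrableOn f (Ioi b) from ⟨this a b, this b a⟩
  intro a b h
  rcases le_total a b with hab | hba
  · exact h.mono_set (Ioi_subset_Ioi hab)
  · rw [← Ioc_union_Ioi_eq_Ioi hba]
    exact hf.integrableOn_Ioc.union h

theorem Continuous.hasDerivAt_integral_Ioi {E : Type*} [NormedAddCommGroup E] [NormedSpace ℝ E]
    [CompleteSpace E] {f : ℝ → E} (hf : Continuous f) {b : ℝ} (hb : IntegrableOn f (Ioi b))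
    (x : ℝ) : HasDerivAt (fun a => ∫ ξ in Ioi a, f ξ) (-f x) x := by
  have hsplit : (fun a => ∫ ξ in Ioi a, f ξ) =
      fun a => (∫ ξ in a..b, f ξ) + ∫ ξ in Ioi b, f ξ := funext fun a =>
    (intervalIntegral.integral_interval_add_Ioi' (hf.intervalIntegrable _ _) hb).symm
  rw [hsplit]
  exact (intervalIntegral.integral_hasDerivAt_left (hf.intervalIntegrable _ _)
    (hf.stronglyMeasurableAtFilter _ _) hf.continuousAt).add_const _

theorem integral_Ioi_eq_sub_of_hasDerivAt_neg {f g : ℝ → ℝ} {x c : ℝ}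
    (hg : ∀ ξ, HasDerivAt g (-f ξ) ξ) (hf : IntegrableOn f (Ioi x))
    (hlim : Tendsto g atTop (𝓝 c)) : ∫ ξ in Ioi x, f ξ = g x - c := by
  have := integral_Ioi_of_hasDerivAt_of_tendsto' (fun ξ _ => hg ξ) hf.neg hlim
  rw [integral_neg] at this
  linarith

section Conservation

variable {S : Set ℝ} {A c : ℝ} {m mt g : ℝ → ℝ → ℝ}

theorem mem_closure_setOf_integrableOn_Ioi (hS : IsOpen S) (hm : ∀ t ∈ S, Continuous (m · t))
    (hmt : ∀ x, ∀ t ∈ S, HasDerivAt (m x ·) (mt x t) t)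
    (hmt_cont : ∀ t ∈ S, Continuous (mt · t))
    (hint : ∀ x, ∀ t ∈ S, IntegrableOn (fun ξ => m ξ t - A) (Ioi x))
    (hdiff : ∀ x, ∀ t ∈ S,
      HasDerivAt (fun τ => ∫ ξ in Ioi x, (m ξ τ - A)) (∫ ξ in Ioi x, mt ξ t) t)
    {t₀ : ℝ} (ht₀ : t₀ ∈ S) :
    t₀ ∈ closure {t ∈ S | ∀ x, IntegrableOn (mt · t) (Ioi x)} := by
  by_contra hcl
  obtain ⟨U, hU, hUs⟩ : ∃ U ∈ 𝓝 t₀, ¬ (U ∩ _).Nonempty := by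
    simpa [mem_closure_iff_nhds] using hcl
  obtain ⟨δ, hδ, hball⟩ := Metric.mem_nhds_iff.1 (inter_mem hU (hS.mem_nhds ht₀))
  -- near `t₀` the flux is nowhere integrable, so its Bochner integrals vanish and `m` is frozen
  have hzero : ∀ τ ∈ Metric.ball t₀ δ, ∀ x, ∫ ξ in Ioi x, mt ξ τ = 0 := fun τ hτ x =>
    integral_undef fun hx => hUs ⟨τ, (hball hτ).1, (hball hτ).2,
      fun x' => ((hmt_cont τ (hball hτ).2).integrableOn_Ioi_iff x x').1 hx⟩
  have hF : ∀ x, ∀ τ ∈ Metric.ball t₀ δ,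
      ∫ ξ in Ioi x, (m ξ τ - A) = ∫ ξ in Ioi x, (m ξ t₀ - A) := fun x τ hτ =>
    Metric.isOpen_ball.is_const_of_deriv_eq_zero (convex_ball t₀ δ).isPreconnected
      (fun τ hτ => (hdiff x τ (hball hτ).2).differentiableAt.differentiableWithinAt)
      (fun τ hτ => by rw [(hdiff x τ (hball hτ).2).deriv, hzero τ hτ x]; rfl)
      hτ (Metric.mem_ball_self hδ)
  have hF' : ∀ t ∈ S, ∀ x, HasDerivAt (fun x' => ∫ ξ in Ioi x', (m ξ t - A)) (-(m x t - A)) x :=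
    fun t ht x => Continuous.hasDerivAt_integral_Ioi (f := fun ξ => m ξ t - A)
      ((hm t ht).sub continuous_const) (hint x t ht) x
  have hm_const : ∀ x, ∀ τ ∈ Metric.ball t₀ δ, m x τ = m x t₀ := by
    intro x τ hτ
    have h := hF' τ (hball hτ).2 x
    rw [funext fun x' => hF x' τ hτ] at h
    linarith [h.unique (hF' t₀ ht₀ x)]
  have hmt_zero : ∀ x, mt x t₀ = 0 := fun x => (hmt x t₀ ht₀).unique
    ((hasDerivAt_const t₀ (m x t₀)).congr_of_eventuallyEq
      (eventually_of_mem (Metric.ball_mem_nhds t₀ hδ) (hm_const x)))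
  exact hcl (subset_closure ⟨ht₀, fun x => by simp [hmt_zero]⟩)

theorem integrableOn_Ioi_of_continuousAt_integral (hS : IsOpen S)
    (hm : ∀ t ∈ S, Continuous (m · t)) (hmt : ∀ x, ∀ t ∈ S, HasDerivAt (m x ·) (mt x t) t)
    (hmt_cont : ∀ t ∈ S, Continuous (mt · t))
    (hint : ∀ x, ∀ t ∈ S, IntegrableOn (fun ξ => m ξ t - A) (Ioi x))
    (hdiff : ∀ x, ∀ t ∈ S,
      HasDerivAt (fun τ => ∫ ξ in Ioi x, (m ξ τ - A)) (∫ ξ in Ioi x, mt ξ t) t)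
    (hg : ∀ x, ∀ t ∈ S, HasDerivAt (g · t) (-mt x t) x)
    (hg_lim : ∀ t ∈ S, Tendsto (g · t) atTop (𝓝 c))
    (hg_cont : ∀ x, ∀ t ∈ S, ContinuousAt (g x) t)
    (hI_cont : ∀ x, ∀ t ∈ S, ContinuousAt (fun τ => ∫ ξ in Ioi x, mt ξ τ) t)
    (t₀ : ℝ) (ht₀ : t₀ ∈ S) (x₀ : ℝ) : IntegrableOn (mt · t₀) (Ioi x₀) := by
  set s := {t ∈ S | ∀ x, IntegrableOn (mt · t) (Ioi x)}
  have hFTC : ∀ t ∈ s, ∀ x, ∫ ξ in Ioi x, mt ξ t = g x t - c := fun t ht x =>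
    integral_Ioi_eq_sub_of_hasDerivAt_neg (hg · t ht.1) (ht.2 x) (hg_lim t ht.1)
  by_contra hnot
  have hI₀ : ∀ x, ∫ ξ in Ioi x, mt ξ t₀ = 0 := fun x => integral_undef fun hx =>
    hnot (((hmt_cont t₀ ht₀).integrableOn_Ioi_iff x x₀).1 hx)
  have hg_const : ∀ x, g x t₀ = c := by
    intro x
    have := mem_closure_iff_nhdsWithin_neBot.1
      (mem_closure_setOf_integrableOn_Ioi hS hm hmt hmt_cont hint hdiff ht₀)
    have h₁ : Tendsto (fun τ => ∫ ξ in Ioi x, mt ξ τ) (𝓝[s] t₀) (𝓝 (g x t₀ - c)) :=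
      (((hg_cont x t₀ ht₀).sub continuousAt_const).tendsto.mono_left nhdsWithin_le_nhds).congr'
        (eventually_nhdsWithin_of_forall fun t ht => (hFTC t ht x).symm)
    have h₂ := (hI_cont x t₀ ht₀).tendsto.mono_left (nhdsWithin_le_nhds (s := s))
    rw [hI₀] at h₂
    linarith [tendsto_nhds_unique h₁ h₂]
  have hmt_zero : ∀ x, mt x t₀ = 0 := fun x => by
    linarith [(hg x t₀ ht₀).unique
      ((hasDerivAt_const x c).congr_of_eventuallyEq (Eventually.of_forall hg_const))]
  exact hnot (by simp [hmt_zero])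

end Conservation

namespace ModifiedCamassaHolm

section Slice

variable {u ux uxx m : ℝ → ℝ}

theorem contDiff_momentum (hu : ContDiff ℝ 3 u) (hux : ∀ x, HasDerivAt u (ux x) x)
    (huxx : ∀ x, HasDerivAt ux (uxx x) x) (hm : ∀ x, m x = u x - uxx x) :
    ContDiff ℝ 1 m := by
  rw [funext hm]
  exact (hu.of_le (by norm_num)).sub ((hu.contDiff_of_hasDerivAt hux).contDiff_of_hasDerivAt huxx)

theorem continuous_deriv_flux {g' : ℝ → ℝ} (hu : ContDiff ℝ 3 u)
    (hux : ∀ x, HasDerivAt u (ux x) x) (huxx : ∀ x, HasDerivAt ux (uxx x) x)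
    (hm : ∀ x, m x = u x - uxx x)
    (hg : ∀ x, HasDerivAt (fun ξ => (u ξ ^ 2 - ux ξ ^ 2) * m ξ) (g' x) x) : Continuous g' := by
  have hux1 : ContDiff ℝ 1 ux := (hu.contDiff_of_hasDerivAt hux).of_le (by norm_num)
  have hflux : ContDiff ℝ 1 fun ξ => (u ξ ^ 2 - ux ξ ^ 2) * m ξ :=
    (((hu.of_le (by norm_num)).pow 2).sub (hux1.pow 2)).mul (contDiff_momentum hu hux huxx hm)
  exact (hflux.contDiff_of_hasDerivAt (n := 0) hg).continuous

end Slice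

variable {A2 : ℝ} {S : Set ℝ} {m mt y X Xy Xt : ℝ → ℝ → ℝ}

theorem hasDerivAt_y_fst (hA : A2 ≠ 0)
    (hy : ∀ x t, y x t = x - (1 / A2) * (∫ ξ in Ioi x, (m ξ t - A2)) - A2 ^ 2 * t)
    (hm : ∀ t ∈ S, Continuous (m · t))
    (hint : ∀ x, ∀ t ∈ S, IntegrableOn (fun ξ => m ξ t - A2) (Ioi x)) (x t : ℝ) (ht : t ∈ S) :
    HasDerivAt (y · t) (m x t / A2) x := by
  rw [funext (hy · t)]
  have hF := Continuous.hasDerivAt_integral_Ioi (f := fun ξ => m ξ t - A2)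
    ((hm t ht).sub continuous_const) (hint x t ht) x
  refine (((hasDerivAt_id x).sub (hF.const_mul (1 / A2))).sub_const _).congr_deriv ?_
  field_simp
  ring

theorem hasDerivAt_y_snd
    (hy : ∀ x t, y x t = x - (1 / A2) * (∫ ξ in Ioi x, (m ξ t - A2)) - A2 ^ 2 * t)
    (hdiff : ∀ x, ∀ t ∈ S,
      HasDerivAt (fun τ => ∫ ξ in Ioi x, (m ξ τ - A2)) (∫ ξ in Ioi x, mt ξ t) t)
    (x t : ℝ) (ht : t ∈ S) :
    HasDerivAt (y x ·) (-(1 / A2) * (∫ ξ in Ioi x, mt ξ t) - A2 ^ 2) t := by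
  rw [funext (hy x)]
  exact (((hasDerivAt_const t x).sub ((hdiff x t ht).const_mul (1 / A2))).sub
    ((hasDerivAt_id t).const_mul (A2 ^ 2))).congr_deriv (by ring)

theorem strictMono_y (hA : 0 < A2) (hmpos : ∀ x, ∀ t ∈ S, 0 < m x t)
    (hyx : ∀ x, ∀ t ∈ S, HasDerivAt (y · t) (m x t / A2) x) (t : ℝ) (ht : t ∈ S) :
    StrictMono (y · t) :=
  strictMono_of_hasDerivAt_pos (hyx · t ht) fun x => div_pos (hmpos x t ht) hA

theorem X_y_eq (hA : 0 < A2) (hmpos : ∀ x, ∀ t ∈ S, 0 < m x t)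
    (hyx : ∀ x, ∀ t ∈ S, HasDerivAt (y · t) (m x t / A2) x)
    (hinv : ∀ v, ∀ t ∈ S, y (X v t) t = v) (x t : ℝ) (ht : t ∈ S) : X (y x t) t = x :=
  (strictMono_y hA hmpos hyx t ht).injective (hinv _ t ht)

theorem Xy_eq (hA : A2 ≠ 0) (hmpos : ∀ x, ∀ t ∈ S, 0 < m x t)
    (hyx : ∀ x, ∀ t ∈ S, HasDerivAt (y · t) (m x t / A2) x)
    (hXy : ∀ v, ∀ t ∈ S, HasDerivAt (X · t) (Xy v t) v)
    (hinv : ∀ v, ∀ t ∈ S, y (X v t) t = v) (v t : ℝ) (ht : t ∈ S) :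
    Xy v t = A2 / m (X v t) t := by
  rw [← inv_div]
  exact (hXy v t ht).unique (.of_local_left_inverse (hXy v t ht).continuousAt (hyx _ t ht)
    (div_ne_zero (hmpos _ t ht).ne' hA) (.of_forall (hinv · t ht)))

theorem m_mul_Xt_eq (hA : A2 ≠ 0) (hS : IsOpen S) (hmpos : ∀ x, ∀ t ∈ S, 0 < m x t)
    (hXy : ∀ v, ∀ t ∈ S, HasDerivAt (X · t) (Xy v t) v)
    (hXt : ∀ v, ∀ t ∈ S, HasDerivAt (X v ·) (Xt v t) t)
    (hXycont : ContinuousOn (fun p : ℝ × ℝ => Xy p.1 p.2) (univ ×ˢ S))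
    (hXtcont : ContinuousOn (fun p : ℝ × ℝ => Xt p.1 p.2) (univ ×ˢ S))
    (hyt : ∀ x, ∀ t ∈ S, HasDerivAt (y x ·) (-(1 / A2) * (∫ ξ in Ioi x, mt ξ t) - A2 ^ 2) t)
    (hXy_eq : ∀ v, ∀ t ∈ S, Xy v t = A2 / m (X v t) t)
    (hX_y : ∀ x, ∀ t ∈ S, X (y x t) t = x) (x t : ℝ) (ht : t ∈ S) :
    m x t * Xt (y x t) t = (∫ ξ in Ioi x, mt ξ t) + A2 ^ 3 := by
  have h := hasDerivAt_comp_of_continuousOn_partials hS hXy hXt hXycont hXtcont ht (hyt x t ht)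
  have hconst : (fun τ => X (y x τ) τ) =ᶠ[𝓝 t] fun _ => x :=
    (hS.eventually_mem ht).mono fun τ hτ => hX_y x τ hτ
  have h0 := (h.congr_of_eventuallyEq hconst.symm).unique (hasDerivAt_const t x)
  rw [hXy_eq _ t ht, hX_y x t ht] at h0
  have := (hmpos x t ht).ne'
  field_simp at h0
  linear_combination h0

theorem continuousAt_m (hA : A2 ≠ 0) (hS : IsOpen S) (hmpos : ∀ x, ∀ t ∈ S, 0 < m x t)
    (hXt : ∀ v, ∀ t ∈ S, HasDerivAt (X v ·) (Xt v t) t)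
    (hXycont : ContinuousOn (fun p : ℝ × ℝ => Xy p.1 p.2) (univ ×ˢ S))
    (hy_mono : ∀ t ∈ S, StrictMono (y · t)) (hinv : ∀ v, ∀ t ∈ S, y (X v t) t = v)
    (hXy_eq : ∀ v, ∀ t ∈ S, Xy v t = A2 / m (X v t) t)
    (hX_y : ∀ x, ∀ t ∈ S, X (y x t) t = x) (x t : ℝ) (ht : t ∈ S) :
    ContinuousAt ↿m (x, t) := by
  have hy : ContinuousAt ↿y (x, t) := continuousAt_uncurry_of_strictMono_of_rightInverse
    ((hS.eventually_mem ht).mono hy_mono) ((hS.eventually_mem ht).mono fun τ hτ v => hinv v τ hτ)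
    fun v => (hXt v t ht).continuousAt
  have hXy : ContinuousAt (fun p : ℝ × ℝ => Xy (y p.1 p.2) p.2) (x, t) :=
    (hXycont.continuousAt ((isOpen_univ.prod hS).mem_nhds ⟨trivial, ht⟩)).comp_of_eq
      (hy.prodMk continuousAt_snd) rfl
  have hdiv : ContinuousAt (fun p : ℝ × ℝ => A2 / Xy (y p.1 p.2) p.2) (x, t) := by
    refine continuousAt_const.div hXy ?_
    rw [hXy_eq _ t ht, hX_y x t ht]
    exact div_ne_zero hA (hmpos x t ht).ne'
  refine hdiv.congr ?_
  filter_upwards [continuousAt_snd.preimage_mem_nhds (hS.mem_nhds ht)] with p hp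
  rw [hXy_eq _ _ hp, hX_y _ _ hp, div_div_cancel₀ hA]
  rfl

theorem continuousAt_integral_mt (hS : IsOpen S)
    (hmt : ∀ x, ∀ t ∈ S, HasDerivAt (m x ·) (mt x t) t)
    (hXtcont : ContinuousOn (fun p : ℝ × ℝ => Xt p.1 p.2) (univ ×ˢ S))
    (hyt : ∀ x, ∀ t ∈ S, HasDerivAt (y x ·) (-(1 / A2) * (∫ ξ in Ioi x, mt ξ t) - A2 ^ 2) t)
    (hchain : ∀ x, ∀ t ∈ S, m x t * Xt (y x t) t = (∫ ξ in Ioi x, mt ξ t) + A2 ^ 3)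
    (x t : ℝ) (ht : t ∈ S) : ContinuousAt (fun τ => ∫ ξ in Ioi x, mt ξ τ) t := by
  have hXt : ContinuousAt (fun τ => Xt (y x τ) τ) t :=
    (hXtcont.continuousAt ((isOpen_univ.prod hS).mem_nhds ⟨trivial, ht⟩)).comp_of_eq
      ((hyt x t ht).continuousAt.prodMk continuousAt_id) rfl
  have h : ContinuousAt (fun τ => m x τ * Xt (y x τ) τ - A2 ^ 3) t :=
    ((hmt x t ht).continuousAt.mul hXt).sub continuousAt_const
  refine h.congr ?_
  filter_upwards [hS.mem_nhds ht] with τ hτ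
  rw [hchain x τ hτ, add_sub_cancel_right]

theorem Xt_eq {u ux : ℝ → ℝ → ℝ} (hmpos : ∀ x, ∀ t ∈ S, 0 < m x t)
    (hg : ∀ x, ∀ t ∈ S, HasDerivAt (fun ξ => ((u ξ t) ^ 2 - (ux ξ t) ^ 2) * m ξ t) (-mt x t) x)
    (hlim : ∀ t ∈ S, Tendsto (fun ξ => ((u ξ t) ^ 2 - (ux ξ t) ^ 2) * m ξ t) atTop (𝓝 (A2 ^ 3)))
    (hmt_int : ∀ t ∈ S, ∀ x, IntegrableOn (mt · t) (Ioi x))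
    (hchain : ∀ x, ∀ t ∈ S, m x t * Xt (y x t) t = (∫ ξ in Ioi x, mt ξ t) + A2 ^ 3)
    (hinv : ∀ v, ∀ t ∈ S, y (X v t) t = v) (v t : ℝ) (ht : t ∈ S) :
    Xt v t = (u (X v t) t) ^ 2 - (ux (X v t) t) ^ 2 := by
  have h := hchain (X v t) t ht
  rw [hinv v t ht, integral_Ioi_eq_sub_of_hasDerivAt_neg (hg · t ht) (hmt_int t ht _) (hlim t ht),
    sub_add_cancel, mul_comm] at h
  exact mul_right_cancel₀ (hmpos _ t ht).ne' h

theorem Xyt_eq {u ux uxx Xyt : ℝ → ℝ → ℝ} (hS : IsOpen S)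
    (hux : ∀ x, ∀ t ∈ S, HasDerivAt (fun ξ => u ξ t) (ux x t) x)
    (huxx : ∀ x, ∀ t ∈ S, HasDerivAt (fun ξ => ux ξ t) (uxx x t) x)
    (hm : ∀ x t, m x t = u x t - uxx x t) (hmpos : ∀ x, ∀ t ∈ S, 0 < m x t)
    (hXy : ∀ v, ∀ t ∈ S, HasDerivAt (X · t) (Xy v t) v)
    (hXt : ∀ v, ∀ t ∈ S, HasDerivAt (X v ·) (Xt v t) t)
    (hXyt : ∀ v, ∀ t ∈ S, HasDerivAt (Xy v ·) (Xyt v t) t)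
    (hXycont : ContinuousOn (fun p : ℝ × ℝ => Xy p.1 p.2) (univ ×ˢ S))
    (hXytcont : ContinuousOn (fun p : ℝ × ℝ => Xyt p.1 p.2) (univ ×ˢ S))
    (hXy_eq : ∀ v, ∀ t ∈ S, Xy v t = A2 / m (X v t) t)
    (hXt_eq : ∀ v, ∀ t ∈ S, Xt v t = (u (X v t) t) ^ 2 - (ux (X v t) t) ^ 2)
    (v t : ℝ) (ht : t ∈ S) : Xyt v t = 2 * A2 * ux (X v t) t := by
  have h₁ := hasDerivAt_partial_of_hasDerivAt_mixed hS hXy hXt hXyt hXycont hXytcont ht v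
  have h₂ : HasDerivAt (Xt · t) ((2 * u (X v t) t * ux (X v t) t
      - 2 * ux (X v t) t * uxx (X v t) t) * Xy v t) v := by
    rw [funext (hXt_eq · t ht)]
    exact ((((hux _ t ht).pow 2).sub ((huxx _ t ht).pow 2)).comp v (hXy v t ht)).congr_deriv
      (by ring)
  have hm₀ := (hmpos (X v t) t ht).ne'
  rw [hm] at hm₀
  rw [h₁.unique h₂, hXy_eq v t ht, hm]
  field_simp

theorem log_a1_eq {a1 : ℝ → ℝ → ℝ} (hA : A2 ≠ 0)
    (hy : ∀ x t, y x t = x - (1 / A2) * (∫ ξ in Ioi x, (m ξ t - A2)) - A2 ^ 2 * t)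
    (hinv : ∀ v, ∀ t ∈ S, y (X v t) t = v)
    (ha1 : ∀ v t, a1 v t = Real.exp (-(1 / (2 * A2)) * ∫ ξ in Ioi (X v t), (m ξ t - A2)))
    (v t : ℝ) (ht : t ∈ S) : Real.log (a1 v t) = -(X v t - v - A2 ^ 2 * t) / 2 := by
  have h := hinv v t ht
  rw [hy] at h
  rw [ha1, Real.log_exp]
  field_simp at h ⊢
  linarith

theorem ux_eq_deriv_deriv_log {a1 Xyt ux : ℝ → ℝ → ℝ} (hA : A2 ≠ 0) (hS : IsOpen S)
    (hXy : ∀ v, ∀ t ∈ S, HasDerivAt (X · t) (Xy v t) v)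
    (hXyt : ∀ v, ∀ t ∈ S, HasDerivAt (Xy v ·) (Xyt v t) t)
    (hlog : ∀ v, ∀ t ∈ S, Real.log (a1 v t) = -(X v t - v - A2 ^ 2 * t) / 2)
    (hXyt_eq : ∀ v, ∀ t ∈ S, Xyt v t = 2 * A2 * ux (X v t) t) (v t : ℝ) (ht : t ∈ S) :
    ux (X v t) t = -(1 / A2) * deriv (fun t' => deriv (fun y' => Real.log (a1 y' t')) v) t := by
  have hinner : ∀ t' ∈ S, deriv (fun y' => Real.log (a1 y' t')) v = (1 - Xy v t') / 2 := by
    intro t' ht'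
    rw [funext (hlog · t' ht')]
    exact ((((hXy v t' ht').sub (hasDerivAt_id v)).sub_const _).neg.div_const 2).deriv.trans
      (by ring)
  have hev : (fun t' => deriv (fun y' => Real.log (a1 y' t')) v) =ᶠ[𝓝 t]
      fun t' => (1 - Xy v t') / 2 := (hS.eventually_mem ht).mono hinner
  have hD : HasDerivAt (fun t' => (1 - Xy v t') / 2) (-Xyt v t / 2) t :=
    (((hasDerivAt_const t 1).sub (hXyt v t ht)).div_const 2).congr_deriv (by ring)
  rw [hev.deriv_eq, hD.deriv, hXyt_eq v t ht]
  field_simp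

end ModifiedCamassaHolm

open ModifiedCamassaHolm

theorem stmt_16_general (A2 T : ℝ) (hA : 0 < A2)
    (u ux uxx m mt gx : ℝ → ℝ → ℝ)
    (hu3 : ∀ t ∈ Set.Ioo 0 T, ContDiff ℝ 3 (fun x => u x t))
    (hut : ∀ x, ContDiffOn ℝ 1 (fun t => u x t) (Set.Ioo 0 T))
    (hux : ∀ x, ∀ t ∈ Set.Ioo 0 T, HasDerivAt (fun ξ => u ξ t) (ux x t) x)
    (huxx : ∀ x, ∀ t ∈ Set.Ioo 0 T, HasDerivAt (fun ξ => ux ξ t) (uxx x t) x)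
    (hm : ∀ x t, m x t = u x t - uxx x t)
    (hmpos : ∀ x, ∀ t ∈ Set.Ioo 0 T, 0 < m x t)
    (hmt : ∀ x, ∀ t ∈ Set.Ioo 0 T, HasDerivAt (fun τ => m x τ) (mt x t) t)
    (hgx : ∀ x, ∀ t ∈ Set.Ioo 0 T,
      HasDerivAt (fun ξ => ((u ξ t)^2 - (ux ξ t)^2) * m ξ t) (gx x t) x)
    (hmch : ∀ x, ∀ t ∈ Set.Ioo 0 T, mt x t + gx x t = 0)
    (hint : ∀ x, ∀ t ∈ Set.Ioo 0 T, IntegrableOn (fun ξ => m ξ t - A2) (Set.Ioi x))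
    (hdiff : ∀ x, ∀ t ∈ Set.Ioo 0 T,
      HasDerivAt (fun τ => ∫ ξ in Set.Ioi x, (m ξ τ - A2))
        (∫ ξ in Set.Ioi x, mt ξ t) t)
    (hlim : ∀ t ∈ Set.Ioo 0 T,
      Tendsto (fun ξ => ((u ξ t)^2 - (ux ξ t)^2) * m ξ t) atTop (nhds (A2^3)))
    (y : ℝ → ℝ → ℝ)
    (hy : ∀ x t, y x t =
      x - (1/A2) * (∫ ξ in Set.Ioi x, (m ξ t - A2)) - A2^2 * t)
    (X Xy Xt Xyt : ℝ → ℝ → ℝ)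
    (hXy : ∀ yv, ∀ t ∈ Set.Ioo 0 T, HasDerivAt (fun y' => X y' t) (Xy yv t) yv)
    (hXt : ∀ yv, ∀ t ∈ Set.Ioo 0 T, HasDerivAt (fun t' => X yv t') (Xt yv t) t)
    (hXyt : ∀ yv, ∀ t ∈ Set.Ioo 0 T, HasDerivAt (fun t' => Xy yv t') (Xyt yv t) t)
    (hXycont : ContinuousOn (fun p : ℝ × ℝ => Xy p.1 p.2)
      (Set.univ ×ˢ Set.Ioo 0 T))
    (hXtcont : ContinuousOn (fun p : ℝ × ℝ => Xt p.1 p.2)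
      (Set.univ ×ˢ Set.Ioo 0 T))
    (hXytcont : ContinuousOn (fun p : ℝ × ℝ => Xyt p.1 p.2)
      (Set.univ ×ˢ Set.Ioo 0 T))
    (hinv : ∀ yv, ∀ t ∈ Set.Ioo 0 T, y (X yv t) t = yv)
    (a1 : ℝ → ℝ → ℝ)
    (ha1 : ∀ yv t, a1 yv t =
      Real.exp (-(1/(2*A2)) * ∫ ξ in Set.Ioi (X yv t), (m ξ t - A2))) :
    ∀ yv, ∀ t ∈ Set.Ioo 0 T,
      Xy yv t = A2 / m (X yv t) t ∧
      Xt yv t = (u (X yv t) t)^2 - (ux (X yv t) t)^2 ∧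
      Xyt yv t = 2 * A2 * ux (X yv t) t ∧
      X yv t = yv - 2 * Real.log (a1 yv t) + A2^2 * t ∧
      ux (X yv t) t =
        -(1/A2) * deriv (fun t' => deriv (fun y' => Real.log (a1 y' t')) yv) t := by
  have hS : IsOpen (Ioo (0 : ℝ) T) := isOpen_Ioo
  have hmc : ∀ t ∈ Ioo 0 T, Continuous (m · t) := fun t ht =>
    (contDiff_momentum (hu3 t ht) (hux · t ht) (huxx · t ht) (hm · t)).continuous
  have hg : ∀ x, ∀ t ∈ Ioo 0 T,
      HasDerivAt (fun ξ => ((u ξ t) ^ 2 - (ux ξ t) ^ 2) * m ξ t) (-mt x t) x := fun x t ht =>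
    (hgx x t ht).congr_deriv (by linarith [hmch x t ht])
  have hmtc : ∀ t ∈ Ioo 0 T, Continuous (mt · t) := fun t ht =>
    (continuous_deriv_flux (hu3 t ht) (hux · t ht) (huxx · t ht) (hm · t) (hg · t ht)).neg.congr
      fun x => neg_neg _
  have hyx := hasDerivAt_y_fst hA.ne' hy hmc hint
  have hyt := hasDerivAt_y_snd hy hdiff
  have hy_mono := strictMono_y hA hmpos hyx
  have hXy_eq := Xy_eq hA.ne' hmpos hyx hXy hinv
  have hX_y := X_y_eq hA hmpos hyx hinv
  have hchain := m_mul_Xt_eq hA.ne' hS hmpos hXy hXt hXycont hXtcont hyt hXy_eq hX_y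
  have hu_cont : ∀ x, ∀ t ∈ Ioo 0 T, ContinuousAt (u x) t := fun x t ht =>
    (hut x).continuousOn.continuousAt (hS.mem_nhds ht)
  have hux_cont : ∀ x, ∀ t ∈ Ioo 0 T, ContinuousAt (ux x) t := fun x t ht =>
    continuousAt_partialDeriv_of_helmholtz (hS.mem_nhds ht) hux
      (fun ξ τ hτ => (huxx ξ τ hτ).congr_deriv (by rw [hm]; ring)) (hu_cont · t ht)
      (continuousAt_m hA.ne' hS hmpos hXt hXycont hy_mono hinv hXy_eq hX_y · t ht) x
  have hmt_int := integrableOn_Ioi_of_continuousAt_integral hS hmc hmt hmtc hint hdiff hg hlim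
    (fun x t ht => (((hu_cont x t ht).pow 2).sub ((hux_cont x t ht).pow 2)).mul
      (hmt x t ht).continuousAt)
    (continuousAt_integral_mt hS hmt hXtcont hyt hchain)
  have hXt_eq := Xt_eq hmpos hg hlim hmt_int hchain hinv
  have hXyt_eq := Xyt_eq hS hux huxx hm hmpos hXy hXt hXyt hXycont hXytcont hXy_eq hXt_eq
  have hlog := log_a1_eq hA.ne' hy hinv ha1
  intro v t ht
  exact ⟨hXy_eq v t ht, hXt_eq v t ht, hXyt_eq v t ht, by rw [hlog v t ht]; ring,
    ux_eq_deriv_deriv_log hA.ne' hS hXy hXyt hlog hXyt_eq v t ht⟩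

/-- properties of the inverse change of variables X(y,t) of
y(x,t) = x − (1/A₂)·∫_x^∞ (m(ξ,t) − A₂) dξ − A₂²·t, and the parametric
representation of u_x via â₁. -/
theorem stmt_16 (A2 T : ℝ) (hA : 0 < A2) (hT : 0 < T)
    (u ux uxx m mx mt gx : ℝ → ℝ → ℝ)
    (hu3 : ∀ t ∈ Set.Ioo 0 T, ContDiff ℝ 3 (fun x => u x t))
    (hut : ∀ x, ContDiffOn ℝ 1 (fun t => u x t) (Set.Ioo 0 T))
    (hux : ∀ x, ∀ t ∈ Set.Ioo 0 T, HasDerivAt (fun ξ => u ξ t) (ux x t) x)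
    (huxx : ∀ x, ∀ t ∈ Set.Ioo 0 T, HasDerivAt (fun ξ => ux ξ t) (uxx x t) x)
    (hm : ∀ x t, m x t = u x t - uxx x t)
    (hmpos : ∀ x, ∀ t ∈ Set.Ioo 0 T, 0 < m x t)
    (hmx : ∀ x, ∀ t ∈ Set.Ioo 0 T, HasDerivAt (fun ξ => m ξ t) (mx x t) x)
    (hmt : ∀ x, ∀ t ∈ Set.Ioo 0 T, HasDerivAt (fun τ => m x τ) (mt x t) t)
    (hgx : ∀ x, ∀ t ∈ Set.Ioo 0 T,
      HasDerivAt (fun ξ => ((u ξ t)^2 - (ux ξ t)^2) * m ξ t) (gx x t) x)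
    (hmch : ∀ x, ∀ t ∈ Set.Ioo 0 T, mt x t + gx x t = 0)
    (hint : ∀ x, ∀ t ∈ Set.Ioo 0 T, IntegrableOn (fun ξ => m ξ t - A2) (Set.Ioi x))
    (hdiff : ∀ x, ∀ t ∈ Set.Ioo 0 T,
      HasDerivAt (fun τ => ∫ ξ in Set.Ioi x, (m ξ τ - A2))
        (∫ ξ in Set.Ioi x, mt ξ t) t)
    (hlim : ∀ t ∈ Set.Ioo 0 T,
      Tendsto (fun ξ => ((u ξ t)^2 - (ux ξ t)^2) * m ξ t) atTop (nhds (A2^3)))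
    (y : ℝ → ℝ → ℝ)
    (hy : ∀ x t, y x t =
      x - (1/A2) * (∫ ξ in Set.Ioi x, (m ξ t - A2)) - A2^2 * t)
    (X Xy Xt Xyt : ℝ → ℝ → ℝ)
    (hXy : ∀ yv, ∀ t ∈ Set.Ioo 0 T, HasDerivAt (fun y' => X y' t) (Xy yv t) yv)
    (hXt : ∀ yv, ∀ t ∈ Set.Ioo 0 T, HasDerivAt (fun t' => X yv t') (Xt yv t) t)
    (hXyt : ∀ yv, ∀ t ∈ Set.Ioo 0 T, HasDerivAt (fun t' => Xy yv t') (Xyt yv t) t)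
    (hXycont : ContinuousOn (fun p : ℝ × ℝ => Xy p.1 p.2)
      (Set.univ ×ˢ Set.Ioo 0 T))
    (hXtcont : ContinuousOn (fun p : ℝ × ℝ => Xt p.1 p.2)
      (Set.univ ×ˢ Set.Ioo 0 T))
    (hXytcont : ContinuousOn (fun p : ℝ × ℝ => Xyt p.1 p.2)
      (Set.univ ×ˢ Set.Ioo 0 T))
    (hinv : ∀ yv, ∀ t ∈ Set.Ioo 0 T, y (X yv t) t = yv)
    (a1 : ℝ → ℝ → ℝ)
    (ha1 : ∀ yv t, a1 yv t =
      Real.exp (-(1/(2*A2)) * ∫ ξ in Set.Ioi (X yv t), (m ξ t - A2))) :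
    ∀ yv, ∀ t ∈ Set.Ioo 0 T,
      Xy yv t = A2 / m (X yv t) t ∧
      Xt yv t = (u (X yv t) t)^2 - (ux (X yv t) t)^2 ∧
      Xyt yv t = 2 * A2 * ux (X yv t) t ∧
      X yv t = yv - 2 * Real.log (a1 yv t) + A2^2 * t ∧
      ux (X yv t) t =
        -(1/A2) * deriv (fun t' => deriv (fun y' => Real.log (a1 y' t')) yv) t :=
  stmt_16_general A2 T hA u ux uxx m mt gx hu3 hut hux huxx hm hmpos hmt hgx hmch hint hdiff hlim y
    hy X Xy Xt Xyt hXy hXt hXyt hXycont hXtcont hXytcont hinv a1 ha1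
end

section
/- Let T ∈ (0, ∞] and let u : ℝ × [0,T) → ℝ be such that u, u_x, u_{xx} and m := u − u_{xx} are continuous, and let q : [0,T) × ℝ → ℝ be continuously differentiable with ∂_x q continuous and ∂_t(∂_x q) = ∂_x(∂_t q), satisfying ∂_t q(t,x) = (u² − u_x²)(q(t,x), t) and q(0,x) = x. Then ∂_t(∂_x q)(t,x) = 2·(m·u_x)(q(t,x), t)·∂_x q(t,x), and consequently ∂_x q(t,x) = exp( 2·∫_0^t (m·u_x)(q(s,x), s) ds ) for all (t,x) ∈ [0,T) × ℝ; in particular ∂_x q(t,x) > 0 everywhere. -/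
open Set Real

/-!
Differentiating `(u² - u_x²)(q(t,x), t)` in `x` gives `2 (u - u_xx) u_x · ∂ₓq = 2 (m u_x)(q, t) · ∂ₓq`,
so by the symmetry of mixed derivatives `∂ₓq(·, x)` solves a scalar linear ODE with continuous
coefficient and initial value `∂ₓq(0, x) = 1`; such a solution is an exponential, hence positive.
-/

theorem hasDerivAt_sq_sub_sq_comp {v w z φ : ℝ → ℝ} {φ' x : ℝ}
    (hv : HasDerivAt v (w (φ x)) (φ x)) (hw : HasDerivAt w (z (φ x)) (φ x))
    (hφ : HasDerivAt φ φ' x) :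
    HasDerivAt (fun y => v (φ y) ^ 2 - w (φ y) ^ 2)
      (2 * ((v (φ x) - z (φ x)) * w (φ x)) * φ') x := by
  refine (((hv.comp x hφ).fun_pow 2).fun_sub ((hw.comp x hφ).fun_pow 2)).congr_deriv ?_
  simp only [Function.comp_apply]
  ring

theorem eq_mul_exp_integral_of_hasDerivWithinAt {f k : ℝ → ℝ} {a b : ℝ} (hab : a ≤ b)
    (hk : ContinuousOn k (Icc a b)) (hf : ContinuousOn f (Icc a b))
    (hf' : ∀ s ∈ Ico a b, HasDerivWithinAt f (k s * f s) (Ici s) s) :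
    f b = f a * exp (∫ s in a..b, k s) := by
  -- extend `k` continuously to all of `ℝ`, so that its primitive is differentiable everywhere
  set K : ℝ → ℝ := fun s => k (projIcc a b hab s)
  have hK : Continuous K :=
    hk.comp_continuous (continuous_subtype_val.comp continuous_projIcc) fun s => (projIcc a b hab s).2
  have hKk : EqOn K k (Icc a b) := fun s hs => by simp only [K, projIcc_of_mem hab hs]
  set F : ℝ → ℝ := fun s => ∫ r in a..s, K r
  have hF : ∀ s, HasDerivAt F (K s) s := fun s => (hK.integral_hasStrictDerivAt a s).hasDerivAt
  set g : ℝ → ℝ := fun s => f s * exp (-F s)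
  have hg' : ∀ s ∈ Ico a b, HasDerivWithinAt g 0 (Ici s) s := by
    intro s hs
    refine ((hf' s hs).mul (hF s).neg.exp.hasDerivWithinAt).congr_deriv ?_
    rw [hKk (Ico_subset_Icc_self hs)]
    ring
  have hg : ContinuousOn g (Icc a b) :=
    hf.mul fun s _ => (hF s).neg.exp.continuousAt.continuousWithinAt
  have hgb : f b * exp (-F b) = f a := by
    simpa [g, F] using constant_of_has_deriv_right_zero hg hg' b ⟨hab, le_rfl⟩
  have hFb : F b = ∫ s in a..b, k s :=
    intervalIntegral.integral_congr fun s hs => hKk (by rwa [uIcc_of_le hab] at hs)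
  rw [← hFb, ← hgb, mul_assoc, ← exp_add, neg_add_cancel, exp_zero, mul_one]

theorem stmt_18_general (T : EReal)
    (u ux uxx m : ℝ → ℝ → ℝ)
    (huxcont : Continuous fun p : ℝ × ℝ => ux p.1 p.2)
    (hmcont : Continuous fun p : ℝ × ℝ => m p.1 p.2)
    (hux : ∀ x t, HasDerivAt (fun ξ => u ξ t) (ux x t) x)
    (huxx : ∀ x t, HasDerivAt (fun ξ => ux ξ t) (uxx x t) x)
    (hm : ∀ x t, m x t = u x t - uxx x t)
    (q qx : ℝ → ℝ → ℝ)
    (hq0 : ∀ x, q 0 x = x)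
    (hqt : ∀ x, ∀ t : ℝ, 0 ≤ t → (t : EReal) < T →
      HasDerivAt (fun t' => q t' x) ((u (q t x) t)^2 - (ux (q t x) t)^2) t)
    (hqx : ∀ t x, HasDerivAt (fun x' => q t x') (qx t x) x)
    (hmixed : ∀ x, ∀ t : ℝ, 0 ≤ t → (t : EReal) < T →
      HasDerivAt (fun t' => qx t' x)
        (deriv (fun x' => (u (q t x') t)^2 - (ux (q t x') t)^2) x) t) :
    ∀ x, ∀ t : ℝ, 0 ≤ t → (t : EReal) < T →
      HasDerivAt (fun t' => qx t' x)
        (2 * (m (q t x) t * ux (q t x) t) * qx t x) t ∧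
      qx t x = Real.exp (2 * ∫ s in (0:ℝ)..t, m (q s x) s * ux (q s x) s) ∧
      0 < qx t x := by
  intro x t ht htT
  have hadm : ∀ s ∈ Icc 0 t, 0 ≤ s ∧ (s : EReal) < T := fun s hs =>
    ⟨hs.1, lt_of_le_of_lt (EReal.coe_le_coe_iff.2 hs.2) htT⟩
  have hjac : ∀ s : ℝ, 0 ≤ s → (s : EReal) < T →
      HasDerivAt (fun t' => qx t' x) (2 * (m (q s x) s * ux (q s x) s) * qx s x) s := by
    intro s hs hsT
    have hd := (hasDerivAt_sq_sub_sq_comp (v := fun ξ => u ξ s) (w := fun ξ => ux ξ s)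
      (z := fun ξ => uxx ξ s) (hux (q s x) s) (huxx (q s x) s) (hqx s x)).deriv
    simpa only [hd, ← hm] using hmixed x s hs hsT
  have hcoef : ContinuousOn (fun s => 2 * (m (q s x) s * ux (q s x) s)) (Icc 0 t) := by
    intro s hs
    have hq : ContinuousAt (fun r => (q r x, r)) s :=
      (hqt x s (hadm s hs).1 (hadm s hs).2).continuousAt.prodMk continuousAt_id
    exact (continuousAt_const.mul ((hmcont.continuousAt.comp hq).mul
      (huxcont.continuousAt.comp hq))).continuousWithinAt
  have hqx0 : qx 0 x = 1 := (hqx 0 x).unique (by simpa only [hq0] using hasDerivAt_id' x)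
  have hexp : qx t x = exp (2 * ∫ s in (0:ℝ)..t, m (q s x) s * ux (q s x) s) := by
    have h := eq_mul_exp_integral_of_hasDerivWithinAt ht hcoef
      (fun s hs => (hjac s (hadm s hs).1 (hadm s hs).2).continuousAt.continuousWithinAt)
      (fun s hs => (hjac s (hadm s (Ico_subset_Icc_self hs)).1
        (hadm s (Ico_subset_Icc_self hs)).2).hasDerivWithinAt)
    rwa [hqx0, one_mul, intervalIntegral.integral_const_mul] at h
  exact ⟨hjac t ht htT, hexp, hexp ▸ exp_pos _⟩

/-- the Jacobian ∂_x q of the characteristic flow satisfies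
∂_t(∂_x q) = 2·(m·u_x)(q,t)·∂_x q, hence
∂_x q(t,x) = exp(2·∫_0^t (m·u_x)(q(s,x),s) ds) > 0. -/
theorem stmt_18 (T : EReal) (hT : 0 < T)
    (u ux uxx m : ℝ → ℝ → ℝ)
    (hucont : Continuous fun p : ℝ × ℝ => u p.1 p.2)
    (huxcont : Continuous fun p : ℝ × ℝ => ux p.1 p.2)
    (huxxcont : Continuous fun p : ℝ × ℝ => uxx p.1 p.2)
    (hmcont : Continuous fun p : ℝ × ℝ => m p.1 p.2)
    (hux : ∀ x t, HasDerivAt (fun ξ => u ξ t) (ux x t) x)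
    (huxx : ∀ x t, HasDerivAt (fun ξ => ux ξ t) (uxx x t) x)
    (hm : ∀ x t, m x t = u x t - uxx x t)
    (q qx : ℝ → ℝ → ℝ)
    (hq0 : ∀ x, q 0 x = x)
    (hqt : ∀ x, ∀ t : ℝ, 0 ≤ t → (t : EReal) < T →
      HasDerivAt (fun t' => q t' x) ((u (q t x) t)^2 - (ux (q t x) t)^2) t)
    (hqx : ∀ t x, HasDerivAt (fun x' => q t x') (qx t x) x)
    (hqxcont : Continuous fun p : ℝ × ℝ => qx p.1 p.2)
    (hmixed : ∀ x, ∀ t : ℝ, 0 ≤ t → (t : EReal) < T →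
      HasDerivAt (fun t' => qx t' x)
        (deriv (fun x' => (u (q t x') t)^2 - (ux (q t x') t)^2) x) t) :
    ∀ x, ∀ t : ℝ, 0 ≤ t → (t : EReal) < T →
      HasDerivAt (fun t' => qx t' x)
        (2 * (m (q t x) t * ux (q t x) t) * qx t x) t ∧
      qx t x = Real.exp (2 * ∫ s in (0:ℝ)..t, m (q s x) s * ux (q s x) s) ∧
      0 < qx t x :=
  stmt_18_general T u ux uxx m huxcont hmcont hux huxx hm q qx hq0 hqt hqx hmixed
end
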